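/- arXiv:1910.13863 — 11 statements merged into one kernel-verified Lean document; each statement's English description precedes it below -/
import Mathlib

section
/- Let (A,μ,α,β) be a BiHom-associative superalgebra with α and β bijective, and let R be a Rota-Baxter operator of weight λ ∈ K on (A,μ,α,β). Define the supercommutator bracket [x,y] = μ(x,y) − (−1)^{|x||y|} μ(α⁻¹β(y), αβ⁻¹(x)) for homogeneous x,y. Then (A,[·,·],α,β) is a BiHom-Lie superalgebra and R is a Rota-Baxter operator of weight λ on it, i.e. [R(x),R(y)] = R([R(x),y] + [x,R(y)] + λ[x,y]) for all homogeneous x,y. -/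
/-!
When `α` and `β` are invertible, `u ⋆ v = μ (α⁻¹ u) (β⁻¹ v)` is an associative product on `A`,
and `α`, `β` are automorphisms of it commuting with `R`, which is therefore again a Rota–Baxter
operator for `⋆`. The bracket of the statement is `[x, y] = ⟦α x, β y⟧`, where
`⟦u, v⟧ = u ⋆ v - (-1)^{|u||v|} v ⋆ u` is the ordinary supercommutator of `⋆`. Every BiHom
identity is thus a classical identity of a supercommutator of an associative superalgebra,
evaluated at twisted arguments.
-/

theorem DirectSum.IsInternal.symm_mem {ι K A : Type*} [DecidableEq ι] [Ring K] [AddCommGroup A]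
    [Module K A] {𝒜 : ι → Submodule K A} (h : DirectSum.IsInternal 𝒜) (e : A ≃ₗ[K] A)
    (he : ∀ i, ∀ a ∈ 𝒜 i, e a ∈ 𝒜 i) (i : ι) {a : A} (ha : a ∈ 𝒜 i) : e.symm a ∈ 𝒜 i := by
  have hmem : e.symm a ∈ 𝒜 i ⊔ ⨆ (k) (_ : k ≠ i), 𝒜 k := by
    rw [← iSup_split_single, h.submodule_iSup_eq_top]
    trivial
  obtain ⟨b, hb, c, hc, hbc⟩ := Submodule.mem_sup.mp hmem
  have hmap : (⨆ (k) (_ : k ≠ i), 𝒜 k).map e.toLinearMap ≤ ⨆ (k) (_ : k ≠ i), 𝒜 k := by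
    simp only [Submodule.map_iSup]
    exact iSup₂_mono fun k _ ↦ Submodule.map_le_iff_le_comap.mpr fun x hx ↦ he k x hx
  have hec : e c = a - e b := by rw [← e.apply_symm_apply a, ← hbc, map_add]; abel
  have hc0 : e c = 0 :=
    Submodule.disjoint_def.mp (iSupIndep_def.mp h.submodule_iSupIndep i) _
      (hec ▸ sub_mem ha (he i b hb)) (hmap (Submodule.mem_map_of_mem hc))
  rw [← hbc, e.map_eq_zero_iff.mp hc0, add_zero]
  exact hb

section

variable {K A : Type*} [Semiring K] [AddCommMonoid A] [Module K A]

theorem LinearEquiv.symm_apply_comm (e : A ≃ₗ[K] A) {f : A → A} (h : ∀ a, f (e a) = e (f a))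
    (a : A) : f (e.symm a) = e.symm (f a) := by
  rw [LinearEquiv.eq_symm_apply, ← h, e.apply_symm_apply]

theorem LinearEquiv.symm_map₂ (e : A ≃ₗ[K] A) {μ : A → A → A}
    (h : ∀ a b, e (μ a b) = μ (e a) (e b)) (a b : A) :
    e.symm (μ a b) = μ (e.symm a) (e.symm b) := by
  rw [LinearEquiv.symm_apply_eq, h, e.apply_symm_apply, e.apply_symm_apply]

theorem LinearEquiv.symm_apply_symm_comm {e e' : A ≃ₗ[K] A} (h : ∀ a, e (e' a) = e' (e a))
    (a : A) : e.symm (e'.symm a) = e'.symm (e.symm a) := by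
  rw [LinearEquiv.symm_apply_eq, e'.symm_apply_comm h, e.apply_symm_apply]

end

section

variable {K A : Type*} [CommRing K] [AddCommGroup A] [Module K A]

def superCommutator (ν : A →ₗ[K] A →ₗ[K] A) (i j : ZMod 2) (u v : A) : A :=
  ν u v - ((-1 : K) ^ (i.val * j.val)) • ν v u

theorem superCommutator_mem {𝒜 : ZMod 2 → Submodule K A} {ν : A →ₗ[K] A →ₗ[K] A}
    (hν : ∀ i j : ZMod 2, ∀ u ∈ 𝒜 i, ∀ v ∈ 𝒜 j, ν u v ∈ 𝒜 (i + j))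
    {i j : ZMod 2} {u v : A} (hu : u ∈ 𝒜 i) (hv : v ∈ 𝒜 j) :
    superCommutator ν i j u v ∈ 𝒜 (i + j) :=
  sub_mem (hν i j u hu v hv) (Submodule.smul_mem _ _ (add_comm j i ▸ hν j i v hv u hu))

theorem map_superCommutator {F : Type*} [FunLike F A A] [LinearMapClass F K A A] (f : F)
    {ν : A →ₗ[K] A →ₗ[K] A} (hf : ∀ u v, f (ν u v) = ν (f u) (f v)) (i j : ZMod 2) (u v : A) :
    f (superCommutator ν i j u v) = superCommutator ν i j (f u) (f v) := by
  simp only [superCommutator, map_sub, map_smul, hf]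

theorem superCommutator_swap (ν : A →ₗ[K] A →ₗ[K] A) (i j : ZMod 2) (u v : A) :
    superCommutator ν i j u v = -(((-1 : K) ^ (i.val * j.val)) • superCommutator ν j i v u) := by
  have hsign : ((-1 : K) ^ (i.val * j.val)) * (-1) ^ (j.val * i.val) = 1 := by
    rw [mul_comm j.val, ← pow_add, ← two_mul, pow_mul]
    norm_num
  simp only [superCommutator, smul_sub, smul_smul, hsign, one_smul, neg_sub]

theorem superCommutator_jacobi {ν : A →ₗ[K] A →ₗ[K] A}
    (hν : ∀ u v w, ν (ν u v) w = ν u (ν v w)) (i j k : ZMod 2) (u v w : A) :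
    ((-1 : K) ^ (i.val * k.val)) • superCommutator ν i (j + k) u (superCommutator ν j k v w)
      + ((-1 : K) ^ (j.val * i.val)) • superCommutator ν j (k + i) v (superCommutator ν k i w u)
      + ((-1 : K) ^ (k.val * j.val)) • superCommutator ν k (i + j) w (superCommutator ν i j u v)
      = 0 := by
  fin_cases i <;> fin_cases j <;> fin_cases k <;>
    simp +decide only [Fin.zero_eta, Fin.mk_one, Fin.isValue, Nat.reduceAdd, Even.neg_pow,
      Odd.neg_one_pow, one_pow, superCommutator, neg_smul, one_smul, neg_sub, sub_neg_eq_add,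
      smul_add, map_add, map_sub, LinearMap.add_apply, LinearMap.sub_apply, hν] <;>
    module

theorem superCommutator_rotaBaxter {ν : A →ₗ[K] A →ₗ[K] A} (R : A →ₗ[K] A) (lam : K)
    {i j : ZMod 2} {x y : A}
    (hxy : ν (R x) (R y) = R (ν (R x) y + ν x (R y) + lam • ν x y))
    (hyx : ν (R y) (R x) = R (ν (R y) x + ν y (R x) + lam • ν y x)) :
    superCommutator ν i j (R x) (R y)
      = R (superCommutator ν i j (R x) y + superCommutator ν i j x (R y)
        + lam • superCommutator ν i j x y) := by
  simp only [superCommutator, hxy, hyx, map_add, map_sub, map_smul]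
  module

end

namespace BiHom

variable {K A : Type*} [CommRing K] [AddCommGroup A] [Module K A]
  {μ : A →ₗ[K] A →ₗ[K] A} {α β : A ≃ₗ[K] A}

def untwist (μ : A →ₗ[K] A →ₗ[K] A) (α β : A ≃ₗ[K] A) : A →ₗ[K] A →ₗ[K] A :=
  μ.compl₁₂ α.symm.toLinearMap β.symm.toLinearMap

@[simp]
theorem untwist_apply (x y : A) : untwist μ α β x y = μ (α.symm x) (β.symm y) := rfl

theorem untwist_assoc (hcomm : ∀ a, α (β a) = β (α a))
    (hαm : ∀ a b, α (μ a b) = μ (α a) (α b)) (hβm : ∀ a b, β (μ a b) = μ (β a) (β b))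
    (hass : ∀ a b c, μ (α a) (μ b c) = μ (μ a b) (β c)) (u v w : A) :
    untwist μ α β (untwist μ α β u v) w = untwist μ α β u (untwist μ α β v w) := by
  have hcomm' := LinearEquiv.symm_apply_symm_comm fun a ↦ (hcomm a).symm
  have h := hass (α.symm (α.symm u)) (α.symm (β.symm v)) (β.symm (β.symm w))
  simp only [LinearEquiv.apply_symm_apply] at h
  simp only [untwist_apply, α.symm_map₂ hαm, β.symm_map₂ hβm, hcomm', h]

theorem map_untwist {f : A → A} (hf : ∀ a b, f (μ a b) = μ (f a) (f b))
    (hfα : ∀ a, f (α a) = α (f a)) (hfβ : ∀ a, f (β a) = β (f a)) (u v : A) :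
    f (untwist μ α β u v) = untwist μ α β (f u) (f v) := by
  simp only [untwist_apply, hf, α.symm_apply_comm hfα, β.symm_apply_comm hfβ]

theorem untwist_mem {ι : Type*} [Add ι] {𝒜 : ι → Submodule K A}
    (hμ : ∀ i j, ∀ a ∈ 𝒜 i, ∀ b ∈ 𝒜 j, μ a b ∈ 𝒜 (i + j))
    (hα : ∀ i, ∀ a ∈ 𝒜 i, α.symm a ∈ 𝒜 i) (hβ : ∀ i, ∀ a ∈ 𝒜 i, β.symm a ∈ 𝒜 i)
    (i j : ι) (x : A) (hx : x ∈ 𝒜 i) (y : A) (hy : y ∈ 𝒜 j) :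
    untwist μ α β x y ∈ 𝒜 (i + j) :=
  hμ i j _ (hα i x hx) _ (hβ j y hy)

theorem untwist_rotaBaxter {ι : Type*} {𝒜 : ι → Submodule K A} {R : A →ₗ[K] A} {lam : K}
    (hRB : ∀ i j, ∀ x ∈ 𝒜 i, ∀ y ∈ 𝒜 j,
      μ (R x) (R y) = R (μ (R x) y + μ x (R y) + lam • μ x y))
    (hα : ∀ i, ∀ a ∈ 𝒜 i, α.symm a ∈ 𝒜 i) (hβ : ∀ i, ∀ a ∈ 𝒜 i, β.symm a ∈ 𝒜 i)
    (hRα : ∀ a, R (α a) = α (R a)) (hRβ : ∀ a, R (β a) = β (R a))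
    {i j : ι} {x y : A} (hx : x ∈ 𝒜 i) (hy : y ∈ 𝒜 j) :
    untwist μ α β (R x) (R y)
      = R (untwist μ α β (R x) y + untwist μ α β x (R y) + lam • untwist μ α β x y) := by
  simp only [untwist_apply, ← α.symm_apply_comm hRα, ← β.symm_apply_comm hRβ]
  exact hRB i j _ (hα i x hx) _ (hβ j y hy)

theorem sub_smul_eq_superCommutator_untwist (hcomm : ∀ a, α (β a) = β (α a))
    (i j : ZMod 2) (x y : A) :
    μ x y - ((-1 : K) ^ (i.val * j.val)) • μ (α.symm (β y)) (α (β.symm x))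
      = superCommutator (untwist μ α β) i j (α x) (β y) := by
  simp only [superCommutator, untwist_apply, LinearEquiv.symm_apply_apply,
    β.symm_apply_comm (f := α) hcomm]

end BiHom

theorem statement0_general
    (K : Type) [Field K]
    (A : Type) [AddCommGroup A] [Module K A]
    (𝒜 : ZMod 2 → Submodule K A)
    (hA : DirectSum.IsInternal 𝒜)
    (μ : A →ₗ[K] A →ₗ[K] A)
    (α β : A ≃ₗ[K] A)
    (hcomm : ∀ a, α (β a) = β (α a))
    (hαe : ∀ i : ZMod 2, ∀ a ∈ 𝒜 i, α a ∈ 𝒜 i)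
    (hβe : ∀ i : ZMod 2, ∀ a ∈ 𝒜 i, β a ∈ 𝒜 i)
    (hμe : ∀ i j : ZMod 2, ∀ a ∈ 𝒜 i, ∀ b ∈ 𝒜 j, μ a b ∈ 𝒜 (i + j))
    (hαm : ∀ a b : A, α (μ a b) = μ (α a) (α b))
    (hβm : ∀ a b : A, β (μ a b) = μ (β a) (β b))
    (hass : ∀ a b c : A, μ (α a) (μ b c) = μ (μ a b) (β c))
    (lam : K)
    (R : A →ₗ[K] A)
    (hRα : ∀ a, R (α a) = α (R a))
    (hRβ : ∀ a, R (β a) = β (R a))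
    (hRB : ∀ i j : ZMod 2, ∀ x ∈ 𝒜 i, ∀ y ∈ 𝒜 j,
      μ (R x) (R y) = R (μ (R x) y + μ x (R y) + lam • μ x y))
    -- the supercommutator bracket (given by its value on homogeneous elements of
    -- parities `i`, `j`)
    (br : ZMod 2 → ZMod 2 → A → A → A)
    (hbr : ∀ i j x y, br i j x y
      = μ x y - ((-1 : K) ^ (i.val * j.val)) • μ (α.symm (β y)) (α (β.symm x))) :
    -- the bracket is even
    (∀ i j : ZMod 2, ∀ x ∈ 𝒜 i, ∀ y ∈ 𝒜 j, br i j x y ∈ 𝒜 (i + j))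
    -- α and β are multiplicative for the bracket
    ∧ (∀ i j : ZMod 2, ∀ x ∈ 𝒜 i, ∀ y ∈ 𝒜 j, α (br i j x y) = br i j (α x) (α y))
    ∧ (∀ i j : ZMod 2, ∀ x ∈ 𝒜 i, ∀ y ∈ 𝒜 j, β (br i j x y) = br i j (β x) (β y))
    -- BiHom super skew-symmetry
    ∧ (∀ i j : ZMod 2, ∀ x ∈ 𝒜 i, ∀ y ∈ 𝒜 j,
        br i j (β x) (α y) = -(((-1 : K) ^ (i.val * j.val)) • br j i (β y) (α x)))
    -- BiHom super-Jacobi identity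
    ∧ (∀ i j k : ZMod 2, ∀ x ∈ 𝒜 i, ∀ y ∈ 𝒜 j, ∀ z ∈ 𝒜 k,
        ((-1 : K) ^ (i.val * k.val)) • br i (j + k) (β (β x)) (br j k (β y) (α z))
        + ((-1 : K) ^ (j.val * i.val)) • br j (k + i) (β (β y)) (br k i (β z) (α x))
        + ((-1 : K) ^ (k.val * j.val)) • br k (i + j) (β (β z)) (br i j (β x) (α y)) = 0)
    -- R is a Rota-Baxter operator of weight lam on the bracket
    ∧ (∀ i j : ZMod 2, ∀ x ∈ 𝒜 i, ∀ y ∈ 𝒜 j,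
        br i j (R x) (R y)
          = R (br i j (R x) y + br i j x (R y) + lam • br i j x y)) := by
  open BiHom in
  have hbr' (i j x y) : br i j x y = superCommutator (untwist μ α β) i j (α x) (β y) :=
    (hbr i j x y).trans (sub_smul_eq_superCommutator_untwist hcomm i j x y)
  have hβα (a : A) : β (α a) = α (β a) := (hcomm a).symm
  have hα' := hA.symm_mem α hαe
  have hβ' := hA.symm_mem β hβe
  refine ⟨?mem, ?mapα, ?mapβ, ?skew, ?jacobi, ?rotaBaxter⟩
  case mem =>
    intro i j x hx y hy
    rw [hbr']
    exact superCommutator_mem (untwist_mem hμe hα' hβ') (hαe i x hx) (hβe j y hy)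
  case mapα =>
    intro i j x _ y _
    rw [hbr', hbr', map_superCommutator α (map_untwist hαm (fun _ ↦ rfl) hcomm), hβα]
  case mapβ =>
    intro i j x _ y _
    rw [hbr', hbr', map_superCommutator β (map_untwist hβm hβα fun _ ↦ rfl), hβα]
  case skew =>
    intro i j x _ y _
    simp only [hbr', hβα]
    exact superCommutator_swap _ i j _ _
  case jacobi =>
    intro i j k x _ y _ z _
    simp only [hbr', map_superCommutator β (map_untwist hβm hβα fun _ ↦ rfl), hβα]
    exact superCommutator_jacobi (untwist_assoc hcomm hαm hβm hass) i j k _ _ _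
  case rotaBaxter =>
    intro i j x hx y hy
    simp only [hbr', ← hRα, ← hRβ]
    exact superCommutator_rotaBaxter R lam
      (untwist_rotaBaxter hRB hα' hβ' hRα hRβ (hαe i x hx) (hβe j y hy))
      (untwist_rotaBaxter hRB hα' hβ' hRα hRβ (hβe j y hy) (hαe i x hx))

theorem statement0
    (K : Type) [Field K] [CharZero K]
    (A : Type) [AddCommGroup A] [Module K A]
    (𝒜 : ZMod 2 → Submodule K A)
    (hA : DirectSum.IsInternal 𝒜)
    (μ : A →ₗ[K] A →ₗ[K] A)
    (α β : A ≃ₗ[K] A)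
    (hcomm : ∀ a, α (β a) = β (α a))
    (hαe : ∀ i : ZMod 2, ∀ a ∈ 𝒜 i, α a ∈ 𝒜 i)
    (hβe : ∀ i : ZMod 2, ∀ a ∈ 𝒜 i, β a ∈ 𝒜 i)
    (hμe : ∀ i j : ZMod 2, ∀ a ∈ 𝒜 i, ∀ b ∈ 𝒜 j, μ a b ∈ 𝒜 (i + j))
    (hαm : ∀ a b : A, α (μ a b) = μ (α a) (α b))
    (hβm : ∀ a b : A, β (μ a b) = μ (β a) (β b))
    (hass : ∀ a b c : A, μ (α a) (μ b c) = μ (μ a b) (β c))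
    (lam : K)
    (R : A →ₗ[K] A)
    (hRe : ∀ i : ZMod 2, ∀ a ∈ 𝒜 i, R a ∈ 𝒜 i)
    (hRα : ∀ a, R (α a) = α (R a))
    (hRβ : ∀ a, R (β a) = β (R a))
    (hRB : ∀ i j : ZMod 2, ∀ x ∈ 𝒜 i, ∀ y ∈ 𝒜 j,
      μ (R x) (R y) = R (μ (R x) y + μ x (R y) + lam • μ x y))
    -- the supercommutator bracket (given by its value on homogeneous elements of
    -- parities `i`, `j`)
    (br : ZMod 2 → ZMod 2 → A → A → A)
    (hbr : ∀ i j x y, br i j x y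
      = μ x y - ((-1 : K) ^ (i.val * j.val)) • μ (α.symm (β y)) (α (β.symm x))) :
    -- the bracket is even
    (∀ i j : ZMod 2, ∀ x ∈ 𝒜 i, ∀ y ∈ 𝒜 j, br i j x y ∈ 𝒜 (i + j))
    -- α and β are multiplicative for the bracket
    ∧ (∀ i j : ZMod 2, ∀ x ∈ 𝒜 i, ∀ y ∈ 𝒜 j, α (br i j x y) = br i j (α x) (α y))
    ∧ (∀ i j : ZMod 2, ∀ x ∈ 𝒜 i, ∀ y ∈ 𝒜 j, β (br i j x y) = br i j (β x) (β y))
    -- BiHom super skew-symmetry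
    ∧ (∀ i j : ZMod 2, ∀ x ∈ 𝒜 i, ∀ y ∈ 𝒜 j,
        br i j (β x) (α y) = -(((-1 : K) ^ (i.val * j.val)) • br j i (β y) (α x)))
    -- BiHom super-Jacobi identity
    ∧ (∀ i j k : ZMod 2, ∀ x ∈ 𝒜 i, ∀ y ∈ 𝒜 j, ∀ z ∈ 𝒜 k,
        ((-1 : K) ^ (i.val * k.val)) • br i (j + k) (β (β x)) (br j k (β y) (α z))
        + ((-1 : K) ^ (j.val * i.val)) • br j (k + i) (β (β y)) (br k i (β z) (α x))
        + ((-1 : K) ^ (k.val * j.val)) • br k (i + j) (β (β z)) (br i j (β x) (α y)) = 0)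
    -- R is a Rota-Baxter operator of weight lam on the bracket
    ∧ (∀ i j : ZMod 2, ∀ x ∈ 𝒜 i, ∀ y ∈ 𝒜 j,
        br i j (R x) (R y)
          = R (br i j (R x) y + br i j x (R y) + lam • br i j x y)) :=
  statement0_general K A 𝒜 hA μ α β hcomm hαe hβe hμe hαm hβm hass lam R hRα hRβ hRB br hbr
end

section
/- Let (A,∘) be a pre-Lie superalgebra and let α,β: A → A be two commuting even algebra morphisms (α(x∘y) = α(x)∘α(y) and β(x∘y) = β(x)∘β(y)). Define the even product x ∘_{α,β} y = α(x) ∘ β(y). Then (A, ∘_{α,β}, α, β) is a BiHom-pre-Lie superalgebra. -/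
/-!
STATEMENT 1: If `(A,∘)` is a pre-Lie superalgebra and `α, β` are two commuting even
algebra morphisms, then `x ∘_{α,β} y = α(x) ∘ β(y)` makes `(A, ∘_{α,β}, α, β)` a
BiHom-pre-Lie superalgebra.
-/
theorem statement1
    (K : Type) [Field K] [CharZero K]
    (A : Type) [AddCommGroup A] [Module K A]
    (𝒜 : ZMod 2 → Submodule K A)
    (hA : DirectSum.IsInternal 𝒜)
    (c : A →ₗ[K] A →ₗ[K] A)
    (hce : ∀ i j : ZMod 2, ∀ x ∈ 𝒜 i, ∀ y ∈ 𝒜 j, c x y ∈ 𝒜 (i + j))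
    -- pre-Lie super-identity
    (hpre : ∀ i j k : ZMod 2, ∀ x ∈ 𝒜 i, ∀ y ∈ 𝒜 j, ∀ z ∈ 𝒜 k,
      c (c x y) z - c x (c y z)
        = ((-1 : K) ^ (i.val * j.val)) • (c (c y x) z - c y (c x z)))
    (α β : A →ₗ[K] A)
    (hcomm : ∀ a, α (β a) = β (α a))
    (hαe : ∀ i : ZMod 2, ∀ a ∈ 𝒜 i, α a ∈ 𝒜 i)
    (hβe : ∀ i : ZMod 2, ∀ a ∈ 𝒜 i, β a ∈ 𝒜 i)
    (hαm : ∀ a b : A, α (c a b) = c (α a) (α b))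
    (hβm : ∀ a b : A, β (c a b) = c (β a) (β b))
    -- the twisted product
    (m : A → A → A) (hm : ∀ a b, m a b = c (α a) (β b)) :
    -- the product is even
    (∀ i j : ZMod 2, ∀ x ∈ 𝒜 i, ∀ y ∈ 𝒜 j, m x y ∈ 𝒜 (i + j))
    -- α and β are multiplicative for it
    ∧ (∀ a b : A, α (m a b) = m (α a) (α b))
    ∧ (∀ a b : A, β (m a b) = m (β a) (β b))
    -- BiHom-pre-Lie super-identity
    ∧ (∀ i j k : ZMod 2, ∀ x ∈ 𝒜 i, ∀ y ∈ 𝒜 j, ∀ z ∈ 𝒜 k,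
        m (m (β x) (α y)) (β z) - m (α (β x)) (m (α y) z)
          = ((-1 : K) ^ (i.val * j.val)) •
              (m (m (β y) (α x)) (β z) - m (α (β y)) (m (α x) z))) := by
  refine ⟨?_, ?_, ?_, ?_⟩
  · intro i j x hx y hy
    rw [hm]
    exact hce i j _ (hαe i x hx) _ (hβe j y hy)
  · intro a b
    rw [hm, hm, hαm, hcomm]
  · intro a b
    rw [hm, hm, hβm, ← hcomm]
  · intro i j k x hx y hy z hz
    have key := hpre i j k _ (hβe i _ (hαe i _ (hαe i _ hx)))
      _ (hβe j _ (hαe j _ (hαe j _ hy))) _ (hβe k _ (hβe k _ hz))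
    simp only [hm, hαm, hβm, hcomm]
    exact key
end

section
/- Let (A,∘,α,β) be a BiHom-pre-Lie superalgebra with α and β bijective. Then: (1) the bracket [x,y]_C = x∘y − (−1)^{|x||y|}(α⁻¹β(y))∘(αβ⁻¹(x)) makes (A,[·,·]_C,α,β) a BiHom-Lie superalgebra (the sub-adjacent BiHom-Lie superalgebra of A); (2) the left multiplication operator L, defined by L(x)(y) = x∘y, gives a representation of (A,[·,·]_C,α,β) on A, i.e. L(α(x))∘α = α∘L(x), L(β(x))∘β = β∘L(x), and L([β(x),y]_C)∘β = L(αβ(x))∘L(y) − (−1)^{|x||y|}L(β(y))∘L(α(x)) for all homogeneous x,y. -/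
/-!
STATEMENT 2: If `(A,∘,α,β)` is a BiHom-pre-Lie superalgebra with `α, β` bijective, then
`[x,y]_C = x∘y − (−1)^{|x||y|}(α⁻¹β(y))∘(αβ⁻¹(x))` makes `(A,[·,·]_C,α,β)` a BiHom-Lie
superalgebra, and the left multiplication operator `L(x)(y) = x∘y` gives a representation
of this BiHom-Lie superalgebra on `A`.
-/
set_option maxHeartbeats 1600000 in
theorem statement2
    (K : Type) [Field K] [CharZero K]
    (A : Type) [AddCommGroup A] [Module K A]
    (𝒜 : ZMod 2 → Submodule K A)
    (hA : DirectSum.IsInternal 𝒜)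
    (c : A →ₗ[K] A →ₗ[K] A)
    (α β : A ≃ₗ[K] A)
    (hcomm : ∀ a, α (β a) = β (α a))
    (hαe : ∀ i : ZMod 2, ∀ a ∈ 𝒜 i, α a ∈ 𝒜 i)
    (hβe : ∀ i : ZMod 2, ∀ a ∈ 𝒜 i, β a ∈ 𝒜 i)
    (hce : ∀ i j : ZMod 2, ∀ x ∈ 𝒜 i, ∀ y ∈ 𝒜 j, c x y ∈ 𝒜 (i + j))
    (hαm : ∀ a b : A, α (c a b) = c (α a) (α b))
    (hβm : ∀ a b : A, β (c a b) = c (β a) (β b))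
    -- BiHom-pre-Lie super-identity
    (hpre : ∀ i j k : ZMod 2, ∀ x ∈ 𝒜 i, ∀ y ∈ 𝒜 j, ∀ z ∈ 𝒜 k,
      c (c (β x) (α y)) (β z) - c (α (β x)) (c (α y) z)
        = ((-1 : K) ^ (i.val * j.val)) •
            (c (c (β y) (α x)) (β z) - c (α (β y)) (c (α x) z)))
    -- the sub-adjacent bracket
    (br : ZMod 2 → ZMod 2 → A → A → A)
    (hbr : ∀ i j x y, br i j x y
      = c x y - ((-1 : K) ^ (i.val * j.val)) • c (α.symm (β y)) (α (β.symm x))) :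
    -- (1) `(A,[·,·]_C,α,β)` is a BiHom-Lie superalgebra:
    (∀ i j : ZMod 2, ∀ x ∈ 𝒜 i, ∀ y ∈ 𝒜 j, br i j x y ∈ 𝒜 (i + j))
    ∧ (∀ i j : ZMod 2, ∀ x ∈ 𝒜 i, ∀ y ∈ 𝒜 j, α (br i j x y) = br i j (α x) (α y))
    ∧ (∀ i j : ZMod 2, ∀ x ∈ 𝒜 i, ∀ y ∈ 𝒜 j, β (br i j x y) = br i j (β x) (β y))
    ∧ (∀ i j : ZMod 2, ∀ x ∈ 𝒜 i, ∀ y ∈ 𝒜 j,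
        br i j (β x) (α y) = -(((-1 : K) ^ (i.val * j.val)) • br j i (β y) (α x)))
    ∧ (∀ i j k : ZMod 2, ∀ x ∈ 𝒜 i, ∀ y ∈ 𝒜 j, ∀ z ∈ 𝒜 k,
        ((-1 : K) ^ (i.val * k.val)) • br i (j + k) (β (β x)) (br j k (β y) (α z))
        + ((-1 : K) ^ (j.val * i.val)) • br j (k + i) (β (β y)) (br k i (β z) (α x))
        + ((-1 : K) ^ (k.val * j.val)) • br k (i + j) (β (β z)) (br i j (β x) (α y)) = 0)
    -- (2) the left multiplication operator gives a representation:
    ∧ (∀ x y : A, c (α x) (α y) = α (c x y))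
    ∧ (∀ x y : A, c (β x) (β y) = β (c x y))
    ∧ (∀ i j : ZMod 2, ∀ x ∈ 𝒜 i, ∀ y ∈ 𝒜 j, ∀ z : A,
        c (br i j (β x) y) (β z)
          = c (α (β x)) (c y z)
            - ((-1 : K) ^ (i.val * j.val)) • c (β y) (c (α x) z)) := by
  -- commutation helpers
  have hc1 : ∀ a : A, β (α a) = α (β a) := fun a => (hcomm a).symm
  have hc2 : ∀ a : A, α.symm (β a) = β (α.symm a) := by
    intro a; apply α.injective
    rw [α.apply_symm_apply, hcomm, α.apply_symm_apply]
  have hc3 : ∀ a : A, β.symm (α a) = α (β.symm a) := by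
    intro a; apply β.injective
    rw [β.apply_symm_apply, ← hcomm, β.apply_symm_apply]
  have hc6 : ∀ a : A, α (β (α.symm a)) = β a := by
    intro a; rw [hcomm, α.apply_symm_apply]
  have hc7 : ∀ a : A, β (α (β.symm a)) = α a := by
    intro a; rw [← hcomm, β.apply_symm_apply]
  have hαm' : ∀ u v : A, α.symm (c u v) = c (α.symm u) (α.symm v) := by
    intro u v; apply α.injective
    rw [α.apply_symm_apply, hαm, α.apply_symm_apply, α.apply_symm_apply]
  have hβm' : ∀ u v : A, β.symm (c u v) = c (β.symm u) (β.symm v) := by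
    intro u v; apply β.injective
    rw [β.apply_symm_apply, hβm, β.apply_symm_apply, β.apply_symm_apply]
  -- splitting and inverse grading
  have hsup : ∀ a : A, a ∈ 𝒜 0 ⊔ 𝒜 1 := by
    intro a
    have h1 : (⊤ : Submodule K A) ≤ 𝒜 0 ⊔ 𝒜 1 := by
      rw [← hA.submodule_iSup_eq_top]
      refine iSup_le fun i => ?_
      fin_cases i
      · exact le_sup_left
      · exact le_sup_right
    exact h1 Submodule.mem_top
  have hsplit : ∀ a : A, ∃ a0 ∈ 𝒜 0, ∃ a1 ∈ 𝒜 1, a = a0 + a1 := by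
    intro a
    obtain ⟨a0, h0, a1, h1, h⟩ := Submodule.mem_sup.mp (hsup a)
    exact ⟨a0, h0, a1, h1, h.symm⟩
  have hdisj : ∀ v : A, v ∈ 𝒜 0 → v ∈ 𝒜 1 → v = 0 := by
    intro v h0 h1
    have hd := hA.submodule_iSupIndep.pairwiseDisjoint (show (0 : ZMod 2) ≠ 1 by decide)
    exact (Submodule.disjoint_def.mp hd) v h0 h1
  have hinv : ∀ (e : A ≃ₗ[K] A), (∀ i : ZMod 2, ∀ a ∈ 𝒜 i, e a ∈ 𝒜 i) →
      ∀ i : ZMod 2, ∀ a ∈ 𝒜 i, e.symm a ∈ 𝒜 i := by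
    intro e he i a ha
    obtain ⟨b0, h0, b1, h1, hb⟩ := hsplit (e.symm a)
    have hae : a = e b0 + e b1 := by rw [← map_add, ← hb, e.apply_symm_apply]
    rcases (show ∀ j : ZMod 2, j = 0 ∨ j = 1 by decide) i with rfl | rfl
    · have h10 : e b1 ∈ 𝒜 0 := by
        have h' : e b1 = a - e b0 := by rw [hae]; abel
        rw [h']; exact Submodule.sub_mem _ ha (he 0 b0 h0)
      have hz : b1 = 0 := by
        apply e.injective; rw [map_zero]; exact hdisj _ h10 (he 1 b1 h1)
      rw [hb, hz, add_zero]; exact h0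
    · have h10 : e b0 ∈ 𝒜 1 := by
        have h' : e b0 = a - e b1 := by rw [hae]; abel
        rw [h']; exact Submodule.sub_mem _ ha (he 1 b1 h1)
      have hz : b0 = 0 := by
        apply e.injective; rw [map_zero]; exact hdisj _ (he 0 b0 h0) h10
      rw [hb, hz, zero_add]; exact h1
  have hαinv := hinv α hαe
  have hβinv := hinv β hβe
  -- sign helpers
  have hmod : ∀ m n : ℕ, m % 2 = n % 2 → ((-1:K))^m = (-1)^n := by
    intro m n h; rw [neg_one_pow_eq_pow_mod_two, h, ← neg_one_pow_eq_pow_mod_two]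
  have hpm : ∀ n : ℕ, ((-1:K)^n = 1 ∨ (-1:K)^n = -1) :=
    fun n => n.even_or_odd.imp (fun h => h.neg_one_pow) (fun h => h.neg_one_pow)
  have hdec : ∀ a b d : ZMod 2, (a.val * (b + d).val) % 2 = (a.val * b.val + a.val * d.val) % 2 := by
    decide
  refine ⟨?_, ?_, ?_, ?_, ?_, ?_, ?_, ?_⟩
  · -- grading
    intro i j x hx y hy
    rw [hbr]
    refine Submodule.sub_mem _ (hce i j x hx y hy) (Submodule.smul_mem _ _ ?_)
    have h : c (α.symm (β y)) (α (β.symm x)) ∈ 𝒜 (j + i) :=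
      hce j i _ (hαinv j _ (hβe j y hy)) _ (hαe i _ (hβinv i x hx))
    rwa [add_comm] at h
  · -- α-multiplicativity
    intro i j x hx y hy
    simp only [hbr, map_sub, map_smul, hαm, hc1, hc2, hc3, hc6, hc7,
      LinearEquiv.apply_symm_apply, LinearEquiv.symm_apply_apply]
  · -- β-multiplicativity
    intro i j x hx y hy
    simp only [hbr, map_sub, map_smul, hβm, hc1, hc2, hc3, hc6, hc7,
      LinearEquiv.apply_symm_apply, LinearEquiv.symm_apply_apply]
  · -- skew symmetry
    intro i j x hx y hy
    simp only [hbr, hc1, hc2, hc3, hc6, hc7,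
      LinearEquiv.apply_symm_apply, LinearEquiv.symm_apply_apply]
    rw [show (ZMod.val j * ZMod.val i) = ZMod.val i * ZMod.val j from Nat.mul_comm _ _]
    rcases hpm (ZMod.val i * ZMod.val j) with h | h <;> rw [h] <;> module
  · -- Jacobi identity
    intro i j k x hx y hy z hz
    obtain ⟨x', hx', rfl⟩ : ∃ w, w ∈ 𝒜 i ∧ x = α w :=
      ⟨α.symm x, hαinv i x hx, (α.apply_symm_apply x).symm⟩
    obtain ⟨y', hy', rfl⟩ : ∃ w, w ∈ 𝒜 j ∧ y = α w :=
      ⟨α.symm y, hαinv j y hy, (α.apply_symm_apply y).symm⟩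
    obtain ⟨z', hz', rfl⟩ : ∃ w, w ∈ 𝒜 k ∧ z = α w :=
      ⟨α.symm z, hαinv k z hz, (α.apply_symm_apply z).symm⟩
    have E1 := hpre j k i (β y') (hβe j y' hy') (β z') (hβe k z' hz')
      (α (α x')) (hαe i _ (hαe i x' hx'))
    have E2 := hpre k i j (β z') (hβe k z' hz') (β x') (hβe i x' hx')
      (α (α y')) (hαe j _ (hαe j y' hy'))
    have E3 := hpre i j k (β x') (hβe i x' hx') (β y') (hβe j y' hy')
      (α (α z')) (hαe k _ (hαe k z' hz'))
    simp only [hc1, hc2, hc3, hc6, hc7, hαm, hβm, hαm', hβm', map_sub, map_smul, map_add,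
      LinearMap.sub_apply, LinearMap.smul_apply, LinearMap.add_apply,
      LinearEquiv.apply_symm_apply, LinearEquiv.symm_apply_apply] at E1 E2 E3
    simp only [hbr]
    simp only [hc1, hc2, hc3, hc6, hc7, hαm, hβm, hαm', hβm', map_sub, map_smul, map_add,
      LinearMap.sub_apply, LinearMap.smul_apply, LinearMap.add_apply,
      LinearEquiv.apply_symm_apply, LinearEquiv.symm_apply_apply]
    have a1 : ((-1:K))^(i.val * (j + k).val)
        = (-1:K)^(i.val * j.val) * (-1:K)^(i.val * k.val) := by
      rw [hmod _ _ (hdec i j k), pow_add]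
    have a2 : ((-1:K))^(j.val * (k + i).val)
        = (-1:K)^(j.val * k.val) * (-1:K)^(j.val * i.val) := by
      rw [hmod _ _ (hdec j k i), pow_add]
    have a3 : ((-1:K))^(k.val * (i + j).val)
        = (-1:K)^(k.val * i.val) * (-1:K)^(k.val * j.val) := by
      rw [hmod _ _ (hdec k i j), pow_add]
    have m1 : ((-1:K))^(j.val * i.val) = (-1:K)^(i.val * j.val) := by rw [Nat.mul_comm]
    have m2 : ((-1:K))^(k.val * j.val) = (-1:K)^(j.val * k.val) := by rw [Nat.mul_comm]
    have m3 : ((-1:K))^(k.val * i.val) = (-1:K)^(i.val * k.val) := by rw [Nat.mul_comm]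
    rw [a1, a2, a3, m1, m2, m3]
    rw [m3] at E2
    rcases hpm (ZMod.val i * ZMod.val j) with ha | ha <;>
      rcases hpm (ZMod.val j * ZMod.val k) with hb | hb <;>
        rcases hpm (ZMod.val i * ZMod.val k) with hd | hd <;>
          rw [ha] at E3 <;> rw [hb] at E1 <;> rw [hd] at E2 <;> rw [ha, hb, hd] <;>
            first
            | linear_combination (norm := module)
                (-1:K) • E1 + (-1:K) • E2 + (-1:K) • E3
            | linear_combination (norm := module)
                (-1:K) • E1 + (-1:K) • E2 + (1:K) • E3
            | linear_combination (norm := module)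
                (-1:K) • E1 + (1:K) • E2 + (-1:K) • E3
            | linear_combination (norm := module)
                (-1:K) • E1 + (1:K) • E2 + (1:K) • E3
            | linear_combination (norm := module)
                (1:K) • E1 + (-1:K) • E2 + (-1:K) • E3
            | linear_combination (norm := module)
                (1:K) • E1 + (-1:K) • E2 + (1:K) • E3
            | linear_combination (norm := module)
                (1:K) • E1 + (1:K) • E2 + (-1:K) • E3
            | linear_combination (norm := module)
                (1:K) • E1 + (1:K) • E2 + (1:K) • E3
  · intro x y; exact (hαm x y).symm
  · intro x y; exact (hβm x y).symm
  · -- representation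
    intro i j x hx y hy z
    have key : ∀ k : ZMod 2, ∀ w ∈ 𝒜 k,
        c (br i j (β x) y) (β w)
          = c (α (β x)) (c y w) - ((-1 : K) ^ (i.val * j.val)) • c (β y) (c (α x) w) := by
      intro k w hw
      have E := hpre i j k x hx (α.symm y) (hαinv j y hy) w hw
      simp only [LinearEquiv.apply_symm_apply, hc6] at E
      rw [hbr]
      simp only [map_sub, map_smul, LinearMap.sub_apply, LinearMap.smul_apply,
        LinearEquiv.symm_apply_apply, hc2]
      linear_combination (norm := module) E
    obtain ⟨z0, h0, z1, h1, rfl⟩ := hsplit z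
    have k0 := key 0 z0 h0
    have k1 := key 1 z1 h1
    simp only [map_add]
    linear_combination (norm := module) k0 + k1
end

section
/- Let (A,∘,α,β) be a BiHom-pre-Lie superalgebra with α,β bijective, let (V,l,r,α_V,β_V) be an A-bimodule with α_V,β_V bijective, and let T: V → A be a super O-operator of weight zero associated to (V,l,r,α_V,β_V). Then T is a super O-operator of weight zero of the sub-adjacent BiHom-Lie superalgebra (A,[·,·]_C,α,β) associated to the representation ρ = l − r, i.e. [T(u),T(v)]_C = T((l−r)(T(u))v − (−1)^{|u||v|}(l−r)(T(α_V⁻¹β_V(v)))(α_Vβ_V⁻¹(u))) for all homogeneous u,v ∈ V, where [x,y]_C = x∘y − (−1)^{|x||y|}(α⁻¹β(y))∘(αβ⁻¹(x)). -/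
/-!
Apply the O-operator identity twice: to `(u, v)` and to the twisted pair
`(α_V⁻¹β_V v, α_Vβ_V⁻¹ u)`. Since `T` intertwines the structure maps, the second application
computes the twisted product `(α⁻¹β T v) ∘ (αβ⁻¹ T u)` occurring in the bracket, and the two
twists undo each other because `α_V` and `β_V` commute. Subtracting, the `r`-terms of the two
identities recombine with sign `(-1)^{2|u||v|} = 1` into `ρ = l - r`.
-/

theorem DirectSum.IsInternal.symm_apply_mem {ι R M : Type*} [DecidableEq ι] [Ring R]
    [AddCommGroup M] [Module R M] {𝒱 : ι → Submodule R M} (h𝒱 : DirectSum.IsInternal 𝒱)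
    (e : M ≃ₗ[R] M) (he : ∀ i, ∀ v ∈ 𝒱 i, e v ∈ 𝒱 i) {i : ι} {v : M} (hv : v ∈ 𝒱 i) :
    e.symm v ∈ 𝒱 i := by
  set W : Submodule R M := ⨆ (j) (_ : j ≠ i), 𝒱 j
  have hW : ∀ w ∈ W, e w ∈ W := fun w hw =>
    (iSup₂_le fun j hj x hx => le_biSup 𝒱 hj (he j x hx) : W ≤ W.comap (e : M →ₗ[R] M)) hw
  have hsplit : e.symm v ∈ 𝒱 i ⊔ W := by
    rw [← iSup_split_single, h𝒱.submodule_iSup_eq_top]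
    exact Submodule.mem_top
  obtain ⟨a, ha, b, hb, hab⟩ := Submodule.mem_sup.mp hsplit
  -- `e b = v - e a` lies in both `𝒱 i` and the complementary sum `W`.
  have heb : e b = v - e a := by rw [eq_sub_iff_add_eq', ← map_add, hab, e.apply_symm_apply]
  have heb0 : e b = 0 := Submodule.disjoint_def.mp (h𝒱.submodule_iSupIndep i) _
    (heb ▸ sub_mem hv (he i a ha)) (hW b hb)
  rw [← hab, e.map_eq_zero_iff.mp heb0, add_zero]
  exact ha

theorem LinearMap.map_symm_apply_of_map_apply {R M N : Type*} [Semiring R] [AddCommMonoid M]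
    [AddCommMonoid N] [Module R M] [Module R N] (T : M →ₗ[R] N) {e : M ≃ₗ[R] M}
    {f : N ≃ₗ[R] N} (h : ∀ v, T (e v) = f (T v)) (w : M) : T (e.symm w) = f.symm (T w) :=
  f.eq_symm_apply.mpr (by rw [← h, e.apply_symm_apply])

theorem LinearEquiv.symm_apply_apply_symm_of_comm {R M : Type*} [Semiring R] [AddCommMonoid M]
    [Module R M] {e f : M ≃ₗ[R] M} (h : ∀ v, e (f v) = f (e v)) (u : M) :
    e.symm (f (e (f.symm u))) = u := by
  rw [← h, e.symm_apply_apply, f.apply_symm_apply]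

theorem LinearEquiv.apply_symm_symm_apply_of_comm {R M : Type*} [Semiring R] [AddCommMonoid M]
    [Module R M] {e f : M ≃ₗ[R] M} (h : ∀ v, e (f v) = f (e v)) (u : M) :
    e (f.symm (e.symm (f u))) = u := by
  have hcomm_symm : e.symm (f u) = f (e.symm u) :=
    e.symm_apply_eq.mpr (by rw [h, e.apply_symm_apply])
  rw [hcomm_symm, f.symm_apply_apply, e.apply_symm_apply]

theorem neg_one_pow_mul_neg_one_pow_self {R : Type*} [Monoid R] [HasDistribNeg R] (n : ℕ) :
    (-1 : R) ^ n * (-1) ^ n = 1 := by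
  rw [← pow_add, ← two_mul, pow_mul, neg_one_sq, one_pow]

theorem statement3_general
    (K : Type) [Field K]
    (A : Type) [AddCommGroup A] [Module K A]
    (c : A →ₗ[K] A →ₗ[K] A)
    (α β : A ≃ₗ[K] A)
    -- the A-bimodule V
    (V : Type) [AddCommGroup V] [Module K V]
    (𝒱 : ZMod 2 → Submodule K V)
    (hV : DirectSum.IsInternal 𝒱)
    (l r : A →ₗ[K] V →ₗ[K] V)
    (αV βV : V ≃ₗ[K] V)
    (hVcomm : ∀ v, αV (βV v) = βV (αV v))
    (hαVe : ∀ k : ZMod 2, ∀ v ∈ 𝒱 k, αV v ∈ 𝒱 k)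
    (hβVe : ∀ k : ZMod 2, ∀ v ∈ 𝒱 k, βV v ∈ 𝒱 k)
    -- T is a super O-operator of weight zero associated to (V,l,r,α_V,β_V)
    (T : V →ₗ[K] A)
    (hTα : ∀ v, T (αV v) = α (T v))
    (hTβ : ∀ v, T (βV v) = β (T v))
    (hT : ∀ i j : ZMod 2, ∀ u ∈ 𝒱 i, ∀ v ∈ 𝒱 j,
      c (T u) (T v)
        = T (l (T u) v
            + ((-1 : K) ^ (i.val * j.val)) •
                r (T (αV.symm (βV v))) (αV (βV.symm u))))
    -- the sub-adjacent bracket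
    (br : ZMod 2 → ZMod 2 → A → A → A)
    (hbr : ∀ i j x y, br i j x y
      = c x y - ((-1 : K) ^ (i.val * j.val)) • c (α.symm (β y)) (α (β.symm x))) :
    -- T is a super O-operator of the sub-adjacent BiHom-Lie superalgebra associated
    -- to the representation ρ = l − r
    ∀ i j : ZMod 2, ∀ u ∈ 𝒱 i, ∀ v ∈ 𝒱 j,
      br i j (T u) (T v)
        = T ((l (T u) v - r (T u) v)
            - ((-1 : K) ^ (i.val * j.val)) •
                (l (T (αV.symm (βV v))) (αV (βV.symm u))
                  - r (T (αV.symm (βV v))) (αV (βV.symm u)))) := by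
  intro i j u hu v hv
  have hTu' : T (αV.symm (βV v)) = α.symm (β (T v)) := by
    rw [T.map_symm_apply_of_map_apply hTα, hTβ]
  have hTv' : T (αV (βV.symm u)) = α (β.symm (T u)) := by
    rw [hTα, T.map_symm_apply_of_map_apply hTβ]
  have htwisted := hT j i _ (hV.symm_apply_mem αV hαVe (hβVe j v hv))
    _ (hαVe i _ (hV.symm_apply_mem βV hβVe hu))
  rw [LinearEquiv.symm_apply_apply_symm_of_comm hVcomm,
    LinearEquiv.apply_symm_symm_apply_of_comm hVcomm, mul_comm j.val] at htwisted
  rw [hbr, hT i j u hu v hv, ← hTu', ← hTv', htwisted]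
  simp only [map_add, map_sub, map_smul, smul_add, smul_sub, smul_smul,
    neg_one_pow_mul_neg_one_pow_self, one_smul]
  abel

theorem statement3
    (K : Type) [Field K] [CharZero K]
    (A : Type) [AddCommGroup A] [Module K A]
    (𝒜 : ZMod 2 → Submodule K A)
    (hA : DirectSum.IsInternal 𝒜)
    (c : A →ₗ[K] A →ₗ[K] A)
    (α β : A ≃ₗ[K] A)
    (hcomm : ∀ a, α (β a) = β (α a))
    (hαe : ∀ i : ZMod 2, ∀ a ∈ 𝒜 i, α a ∈ 𝒜 i)
    (hβe : ∀ i : ZMod 2, ∀ a ∈ 𝒜 i, β a ∈ 𝒜 i)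
    (hce : ∀ i j : ZMod 2, ∀ x ∈ 𝒜 i, ∀ y ∈ 𝒜 j, c x y ∈ 𝒜 (i + j))
    (hαm : ∀ a b : A, α (c a b) = c (α a) (α b))
    (hβm : ∀ a b : A, β (c a b) = c (β a) (β b))
    (hpre : ∀ i j k : ZMod 2, ∀ x ∈ 𝒜 i, ∀ y ∈ 𝒜 j, ∀ z ∈ 𝒜 k,
      c (c (β x) (α y)) (β z) - c (α (β x)) (c (α y) z)
        = ((-1 : K) ^ (i.val * j.val)) •
            (c (c (β y) (α x)) (β z) - c (α (β y)) (c (α x) z)))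
    -- the A-bimodule V
    (V : Type) [AddCommGroup V] [Module K V]
    (𝒱 : ZMod 2 → Submodule K V)
    (hV : DirectSum.IsInternal 𝒱)
    (l r : A →ₗ[K] V →ₗ[K] V)
    (αV βV : V ≃ₗ[K] V)
    (hVcomm : ∀ v, αV (βV v) = βV (αV v))
    (hαVe : ∀ k : ZMod 2, ∀ v ∈ 𝒱 k, αV v ∈ 𝒱 k)
    (hβVe : ∀ k : ZMod 2, ∀ v ∈ 𝒱 k, βV v ∈ 𝒱 k)
    (hle : ∀ i k : ZMod 2, ∀ x ∈ 𝒜 i, ∀ v ∈ 𝒱 k, l x v ∈ 𝒱 (i + k))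
    (hre : ∀ i k : ZMod 2, ∀ x ∈ 𝒜 i, ∀ v ∈ 𝒱 k, r x v ∈ 𝒱 (i + k))
    (hlα : ∀ i k : ZMod 2, ∀ x ∈ 𝒜 i, ∀ v ∈ 𝒱 k, αV (l x v) = l (α x) (αV v))
    (hlβ : ∀ i k : ZMod 2, ∀ x ∈ 𝒜 i, ∀ v ∈ 𝒱 k, βV (l x v) = l (β x) (βV v))
    (hrα : ∀ i k : ZMod 2, ∀ x ∈ 𝒜 i, ∀ v ∈ 𝒱 k, αV (r x v) = r (α x) (αV v))
    (hrβ : ∀ i k : ZMod 2, ∀ x ∈ 𝒜 i, ∀ v ∈ 𝒱 k, βV (r x v) = r (β x) (βV v))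
    (hbl : ∀ i j k : ZMod 2, ∀ x ∈ 𝒜 i, ∀ y ∈ 𝒜 j, ∀ u ∈ 𝒱 k,
      l (c (β x) (α y)) (βV u) - l (α (β x)) (l (α y) u)
        = ((-1 : K) ^ (i.val * j.val)) •
            (l (c (β y) (α x)) (βV u) - l (α (β y)) (l (α x) u)))
    (hbr' : ∀ i j k : ZMod 2, ∀ x ∈ 𝒜 i, ∀ y ∈ 𝒜 j, ∀ u ∈ 𝒱 k,
      r (β x) (r (α y) (βV u)) - r (c (α y) x) (αV (βV u))
        = ((-1 : K) ^ (j.val * k.val)) •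
            (r (β x) (l (β y) (αV u)) - l (α (β y)) (r x (αV u))))
    -- T is a super O-operator of weight zero associated to (V,l,r,α_V,β_V)
    (T : V →ₗ[K] A)
    (hTe : ∀ k : ZMod 2, ∀ v ∈ 𝒱 k, T v ∈ 𝒜 k)
    (hTα : ∀ v, T (αV v) = α (T v))
    (hTβ : ∀ v, T (βV v) = β (T v))
    (hT : ∀ i j : ZMod 2, ∀ u ∈ 𝒱 i, ∀ v ∈ 𝒱 j,
      c (T u) (T v)
        = T (l (T u) v
            + ((-1 : K) ^ (i.val * j.val)) •
                r (T (αV.symm (βV v))) (αV (βV.symm u))))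
    -- the sub-adjacent bracket
    (br : ZMod 2 → ZMod 2 → A → A → A)
    (hbr : ∀ i j x y, br i j x y
      = c x y - ((-1 : K) ^ (i.val * j.val)) • c (α.symm (β y)) (α (β.symm x))) :
    -- T is a super O-operator of the sub-adjacent BiHom-Lie superalgebra associated
    -- to the representation ρ = l − r
    ∀ i j : ZMod 2, ∀ u ∈ 𝒱 i, ∀ v ∈ 𝒱 j,
      br i j (T u) (T v)
        = T ((l (T u) v - r (T u) v)
            - ((-1 : K) ^ (i.val * j.val)) •
                (l (T (αV.symm (βV v))) (αV (βV.symm u))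
                  - r (T (αV.symm (βV v))) (αV (βV.symm u)))) :=
  statement3_general K A c α β V 𝒱 hV l r αV βV hVcomm hαVe hβVe T hTα hTβ hT br hbr
end

section
/- Let (A,∘,α,β) be a BiHom-pre-Lie superalgebra with α,β bijective and let R be a Rota-Baxter operator of weight zero on it. Define x ∗ y = R(x)∘y − (−1)^{|x||y|}(α⁻¹β(y))∘R(αβ⁻¹(x)) for homogeneous x,y. Then (A,∗,α,β) is a BiHom-pre-Lie superalgebra and R is a Rota-Baxter operator of weight zero on (A,∗,α,β). -/
/-!
Since `R` commutes with `α` and `β`, the new product is `x ∗ y = [R x, y]`, where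
`[x, y] = x ∘ y - (-1)^{|x||y|} α⁻¹β(y) ∘ αβ⁻¹(x)` is the BiHom super-commutator. This
commutator is BiHom-skew-symmetric, the pre-Lie identity makes it satisfy the BiHom super-Jacobi
identity in Leibniz form, and a Rota-Baxter operator of weight zero for `∘` is one for `[·, ·]`.
Then, as for Lie algebras, `[R x, y]` is pre-Lie: antisymmetrising `[R [R βx, αy], βz]` in `x, y`
gives `[[βRx, αRy], βz]` by skew-symmetry and the Rota-Baxter identity, and Jacobi expands it.
`α⁻¹` and `β⁻¹` preserve the grading because the images `α(𝒜 i) ≤ 𝒜 i` still span `A`.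
-/

open Set

theorem DirectSum.IsInternal.mapsTo_symm {ι R M : Type*} [DecidableEq ι] [Ring R]
    [AddCommGroup M] [Module R M] {𝒜 : ι → Submodule R M} (h𝒜 : DirectSum.IsInternal 𝒜)
    (e : M ≃ₗ[R] M) (he : ∀ i, MapsTo e (𝒜 i) (𝒜 i)) (i : ι) :
    MapsTo e.symm (𝒜 i) (𝒜 i) := by
  have hmap : (fun i ↦ (𝒜 i).map (e : M →ₗ[R] M)) = 𝒜 :=
    (h𝒜.submodule_iSupIndep.le_iff_eq_of_iSup_eq_top (by
      rw [← Submodule.map_iSup, h𝒜.submodule_iSup_eq_top, Submodule.map_top,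
        LinearEquiv.range])).mp fun i ↦ Submodule.map_le_iff_le_comap.mpr (he i)
  intro a ha
  rw [SetLike.mem_coe, ← congrFun hmap i] at ha
  obtain ⟨b, hb, rfl⟩ := ha
  simpa using hb

def superSign (K : Type*) [CommRing K] (i j : ZMod 2) : K := (-1) ^ (i.val * j.val)

section SuperSign

variable {K : Type*} [CommRing K]

theorem superSign_comm (i j : ZMod 2) : superSign K i j = superSign K j i := by
  rw [superSign, superSign, Nat.mul_comm]

theorem superSign_mul_self (i j : ZMod 2) : superSign K i j * superSign K i j = 1 := by
  rw [superSign, ← pow_add, ← two_mul, pow_mul, neg_one_sq, one_pow]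

theorem superSign_add_left (i j k : ZMod 2) :
    superSign K (i + j) k = superSign K i k * superSign K j k := by
  rw [superSign, superSign, superSign, ZMod.val_add, pow_mul, ← neg_one_pow_eq_pow_mod_two,
    pow_add, mul_pow, ← pow_mul, ← pow_mul]

theorem superSign_add_right (i j k : ZMod 2) :
    superSign K i (j + k) = superSign K i j * superSign K i k := by
  rw [superSign_comm, superSign_add_left, superSign_comm j, superSign_comm k]

end SuperSign

theorem LinearEquiv.symm_map₂_s4 {R M : Type*} [CommSemiring R] [AddCommMonoid M] [Module R M]
    {e : M ≃ₗ[R] M} {c : M →ₗ[R] M →ₗ[R] M} (he : ∀ a b, e (c a b) = c (e a) (e b))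
    (a b : M) : e.symm (c a b) = c (e.symm a) (e.symm b) :=
  e.injective (by simp [he])

theorem LinearEquiv.symm_apply_comm_s4 {R M : Type*} [Semiring R] [AddCommMonoid M] [Module R M]
    {e : M ≃ₗ[R] M} {f : M → M} (h : ∀ a, f (e a) = e (f a)) (a : M) :
    f (e.symm a) = e.symm (f a) :=
  e.injective (by rw [← h, LinearEquiv.apply_symm_apply, LinearEquiv.apply_symm_apply])

section SuperBracket

variable {K A : Type*} [CommRing K] [AddCommGroup A] [Module K A]

-- `i` and `j` stand for the parities of the two arguments.
def superBracket (c : A →ₗ[K] A →ₗ[K] A) (α β : A ≃ₗ[K] A) (i j : ZMod 2) :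
    A →ₗ[K] A →ₗ[K] A :=
  c - superSign K i j • c.flip.compl₁₂ ((α : A →ₗ[K] A) ∘ₗ (β.symm : A →ₗ[K] A))
    ((α.symm : A →ₗ[K] A) ∘ₗ (β : A →ₗ[K] A))

variable (c : A →ₗ[K] A →ₗ[K] A) (α β : A ≃ₗ[K] A)

@[simp]
theorem superBracket_apply (i j : ZMod 2) (x y : A) :
    superBracket c α β i j x y = c x y - superSign K i j • c (α.symm (β y)) (α (β.symm x)) :=
  rfl

theorem superBracket_mem {𝒜 : ZMod 2 → Submodule K A}
    (hc : ∀ i j, ∀ x ∈ 𝒜 i, ∀ y ∈ 𝒜 j, c x y ∈ 𝒜 (i + j))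
    (hα : ∀ i, MapsTo α (𝒜 i) (𝒜 i)) (hα' : ∀ i, MapsTo α.symm (𝒜 i) (𝒜 i))
    (hβ : ∀ i, MapsTo β (𝒜 i) (𝒜 i)) (hβ' : ∀ i, MapsTo β.symm (𝒜 i) (𝒜 i))
    {i j : ZMod 2} {x y : A} (hx : x ∈ 𝒜 i) (hy : y ∈ 𝒜 j) :
    superBracket c α β i j x y ∈ 𝒜 (i + j) := by
  refine sub_mem (hc i j x hx y hy) (Submodule.smul_mem _ _ ?_)
  rw [add_comm]
  exact hc j i _ (hα' j (hβ j hy)) _ (hα i (hβ' i hx))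

theorem map_superBracket {F : Type*} [FunLike F A A] [LinearMapClass F K A A] {f : F}
    (hf : ∀ a b, f (c a b) = c (f a) (f b))
    (hfα : ∀ a, f (α a) = α (f a)) (hfβ : ∀ a, f (β a) = β (f a))
    (i j : ZMod 2) (x y : A) :
    f (superBracket c α β i j x y) = superBracket c α β i j (f x) (f y) := by
  simp [hf, hfα, hfβ, LinearEquiv.symm_apply_comm_s4 hfα, LinearEquiv.symm_apply_comm_s4 hfβ]

theorem superBracket_swap (hαβ : ∀ a, α (β a) = β (α a)) (i j : ZMod 2) (x y : A) :
    superBracket c α β j i (β y) (α x)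
      = -superSign K i j • superBracket c α β i j (β x) (α y) := by
  simp only [superBracket_apply, ← α.symm_apply_comm_s4 fun a ↦ (hαβ a).symm,
    LinearEquiv.symm_apply_apply, superSign_comm j i]
  linear_combination (norm := module) -superSign_mul_self (K := K) i j • c (β y) (α x)

theorem superBracket_rotaBaxter {𝒜 : ZMod 2 → Submodule K A}
    (hα : ∀ i, MapsTo α (𝒜 i) (𝒜 i)) (hα' : ∀ i, MapsTo α.symm (𝒜 i) (𝒜 i))
    (hβ : ∀ i, MapsTo β (𝒜 i) (𝒜 i)) (hβ' : ∀ i, MapsTo β.symm (𝒜 i) (𝒜 i))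
    {R : A →ₗ[K] A} (hRα : ∀ a, R (α a) = α (R a)) (hRβ : ∀ a, R (β a) = β (R a))
    (hRB : ∀ i j, ∀ x ∈ 𝒜 i, ∀ y ∈ 𝒜 j, c (R x) (R y) = R (c (R x) y + c x (R y)))
    {i j : ZMod 2} {x y : A} (hx : x ∈ 𝒜 i) (hy : y ∈ 𝒜 j) :
    superBracket c α β i j (R x) (R y)
      = R (superBracket c α β i j (R x) y + superBracket c α β i j x (R y)) := by
  have hxy := hRB i j x hx y hy
  have hyx := hRB j i _ (hα' j (hβ j hy)) _ (hα i (hβ' i hx))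
  simp only [map_add, hRα, hRβ, LinearEquiv.symm_apply_comm_s4 hRα,
    LinearEquiv.symm_apply_comm_s4 hRβ] at hxy hyx
  simp only [superBracket_apply, map_add, map_sub, map_smul]
  linear_combination (norm := module) hxy - superSign K i j • hyx

theorem superBracket_jacobi {𝒜 : ZMod 2 → Submodule K A}
    (hα : ∀ i, MapsTo α (𝒜 i) (𝒜 i)) (hα' : ∀ i, MapsTo α.symm (𝒜 i) (𝒜 i))
    (hβ : ∀ i, MapsTo β (𝒜 i) (𝒜 i)) (hβ' : ∀ i, MapsTo β.symm (𝒜 i) (𝒜 i))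
    (hαβ : ∀ a, α (β a) = β (α a))
    (hcα : ∀ a b, α (c a b) = c (α a) (α b)) (hcβ : ∀ a b, β (c a b) = c (β a) (β b))
    (hpre : ∀ i j k, ∀ x ∈ 𝒜 i, ∀ y ∈ 𝒜 j, ∀ z ∈ 𝒜 k,
      c (c (β x) (α y)) (β z) - c (α (β x)) (c (α y) z)
        = superSign K i j • (c (c (β y) (α x)) (β z) - c (α (β y)) (c (α x) z)))
    {i j k : ZMod 2} {x y z : A} (hx : x ∈ 𝒜 i) (hy : y ∈ 𝒜 j) (hz : z ∈ 𝒜 k) :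
    superBracket c α β (i + j) k (superBracket c α β i j (β x) (α y)) (β z)
      = superBracket c α β i (j + k) (α (β x)) (superBracket c α β j k (α y) z)
        - superSign K i j •
            superBracket c α β j (i + k) (α (β y)) (superBracket c α β i k (α x) z) := by
  have hw : α.symm (α.symm (β z)) ∈ 𝒜 k := hα' k (hα' k (hβ k hz))
  have hxyz := hpre i j k x hx y hy z hz
  have hxwy := hpre i k j x hx _ hw (α (α (β.symm y))) (hα j (hα j (hβ' j hy)))
  have hywx := hpre j k i y hy _ hw (α (α (β.symm x))) (hα i (hα i (hβ' i hx)))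
  simp only [superBracket_apply, map_sub, map_smul, LinearMap.sub_apply, LinearMap.smul_apply,
    hcα, hcβ, LinearEquiv.symm_map₂_s4 hcα, LinearEquiv.symm_map₂_s4 hcβ, hαβ, β.symm_apply_comm_s4 hαβ,
    ← α.symm_apply_comm_s4 fun a ↦ (hαβ a).symm, LinearEquiv.symm_apply_apply,
    LinearEquiv.apply_symm_apply, superSign_add_left, superSign_add_right, superSign_comm j i]
    at hxyz hxwy hywx ⊢
  linear_combination (norm := skip)
    hxyz - superSign K j k • hxwy + (superSign K i j * superSign K i k) • hywx
  -- the coefficients agree modulo `superSign K i j ^ 2 = 1`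
  match_scalars <;> grind [superSign_mul_self]

theorem superBracket_rotaBaxter_preLie {𝒜 : ZMod 2 → Submodule K A}
    (hα : ∀ i, MapsTo α (𝒜 i) (𝒜 i)) (hα' : ∀ i, MapsTo α.symm (𝒜 i) (𝒜 i))
    (hβ : ∀ i, MapsTo β (𝒜 i) (𝒜 i)) (hβ' : ∀ i, MapsTo β.symm (𝒜 i) (𝒜 i))
    (hαβ : ∀ a, α (β a) = β (α a))
    (hcα : ∀ a b, α (c a b) = c (α a) (α b)) (hcβ : ∀ a b, β (c a b) = c (β a) (β b))
    (hpre : ∀ i j k, ∀ x ∈ 𝒜 i, ∀ y ∈ 𝒜 j, ∀ z ∈ 𝒜 k,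
      c (c (β x) (α y)) (β z) - c (α (β x)) (c (α y) z)
        = superSign K i j • (c (c (β y) (α x)) (β z) - c (α (β y)) (c (α x) z)))
    {R : A →ₗ[K] A} (hR : ∀ i, MapsTo R (𝒜 i) (𝒜 i))
    (hRα : ∀ a, R (α a) = α (R a)) (hRβ : ∀ a, R (β a) = β (R a))
    (hRB : ∀ i j, ∀ x ∈ 𝒜 i, ∀ y ∈ 𝒜 j, c (R x) (R y) = R (c (R x) y + c x (R y)))
    {i j k : ZMod 2} {x y z : A} (hx : x ∈ 𝒜 i) (hy : y ∈ 𝒜 j) (hz : z ∈ 𝒜 k) :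
    superBracket c α β (i + j) k (R (superBracket c α β i j (R (β x)) (α y))) (β z)
        - superBracket c α β i (j + k) (R (α (β x))) (superBracket c α β j k (R (α y)) z)
      = superSign K i j •
          (superBracket c α β (j + i) k (R (superBracket c α β j i (R (β y)) (α x))) (β z)
            - superBracket c α β j (i + k) (R (α (β y))) (superBracket c α β i k (R (α x)) z)) := by
  have hskew := superBracket_swap c α β hαβ j i (R y) x
  have hrb := superBracket_rotaBaxter c α β hα hα' hβ hβ' hRα hRβ hRB (hβ i hx) (hα j hy)
  have hjac := superBracket_jacobi c α β hα hα' hβ hβ' hαβ hcα hcβ hpre (hR i hx) (hR j hy) hz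
  simp only [hRα, hRβ] at hrb ⊢
  have hkey : R (superBracket c α β i j (β (R x)) (α y))
      - superSign K i j • R (superBracket c α β j i (β (R y)) (α x))
        = superBracket c α β i j (β (R x)) (α (R y)) := by
    rw [hrb, map_add, hskew, map_smul, superSign_comm]
    module
  have hkey_z := congrArg (fun t ↦ superBracket c α β (i + j) k t (β z)) hkey
  simp only [map_sub, map_smul, LinearMap.sub_apply, LinearMap.smul_apply] at hkey_z
  rw [add_comm j i]
  linear_combination (norm := module) hkey_z + hjac

end SuperBracket

theorem statement4_general
    (K : Type) [Field K]
    (A : Type) [AddCommGroup A] [Module K A]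
    (𝒜 : ZMod 2 → Submodule K A)
    (hA : DirectSum.IsInternal 𝒜)
    (c : A →ₗ[K] A →ₗ[K] A)
    (α β : A ≃ₗ[K] A)
    (hcomm : ∀ a, α (β a) = β (α a))
    (hαe : ∀ i : ZMod 2, ∀ a ∈ 𝒜 i, α a ∈ 𝒜 i)
    (hβe : ∀ i : ZMod 2, ∀ a ∈ 𝒜 i, β a ∈ 𝒜 i)
    (hce : ∀ i j : ZMod 2, ∀ x ∈ 𝒜 i, ∀ y ∈ 𝒜 j, c x y ∈ 𝒜 (i + j))
    (hαm : ∀ a b : A, α (c a b) = c (α a) (α b))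
    (hβm : ∀ a b : A, β (c a b) = c (β a) (β b))
    (hpre : ∀ i j k : ZMod 2, ∀ x ∈ 𝒜 i, ∀ y ∈ 𝒜 j, ∀ z ∈ 𝒜 k,
      c (c (β x) (α y)) (β z) - c (α (β x)) (c (α y) z)
        = ((-1 : K) ^ (i.val * j.val)) •
            (c (c (β y) (α x)) (β z) - c (α (β y)) (c (α x) z)))
    -- R is a Rota-Baxter operator of weight zero
    (R : A →ₗ[K] A)
    (hRe : ∀ i : ZMod 2, ∀ a ∈ 𝒜 i, R a ∈ 𝒜 i)
    (hRα : ∀ a, R (α a) = α (R a))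
    (hRβ : ∀ a, R (β a) = β (R a))
    (hRB : ∀ i j : ZMod 2, ∀ x ∈ 𝒜 i, ∀ y ∈ 𝒜 j,
      c (R x) (R y) = R (c (R x) y + c x (R y)))
    -- the new product `∗` (on homogeneous elements of parities `i`, `j`)
    (st : ZMod 2 → ZMod 2 → A → A → A)
    (hst : ∀ i j x y, st i j x y
      = c (R x) y
        - ((-1 : K) ^ (i.val * j.val)) • c (α.symm (β y)) (R (α (β.symm x)))) :
    -- `(A,∗,α,β)` is a BiHom-pre-Lie superalgebra:
    (∀ i j : ZMod 2, ∀ x ∈ 𝒜 i, ∀ y ∈ 𝒜 j, st i j x y ∈ 𝒜 (i + j))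
    ∧ (∀ i j : ZMod 2, ∀ x ∈ 𝒜 i, ∀ y ∈ 𝒜 j, α (st i j x y) = st i j (α x) (α y))
    ∧ (∀ i j : ZMod 2, ∀ x ∈ 𝒜 i, ∀ y ∈ 𝒜 j, β (st i j x y) = st i j (β x) (β y))
    ∧ (∀ i j k : ZMod 2, ∀ x ∈ 𝒜 i, ∀ y ∈ 𝒜 j, ∀ z ∈ 𝒜 k,
        st (i + j) k (st i j (β x) (α y)) (β z)
          - st i (j + k) (α (β x)) (st j k (α y) z)
          = ((-1 : K) ^ (i.val * j.val)) •
              (st (j + i) k (st j i (β y) (α x)) (β z)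
                - st j (i + k) (α (β y)) (st i k (α x) z)))
    -- and R is a Rota-Baxter operator of weight zero on `(A,∗,α,β)`:
    ∧ (∀ i j : ZMod 2, ∀ x ∈ 𝒜 i, ∀ y ∈ 𝒜 j,
        st i j (R x) (R y) = R (st i j (R x) y + st i j x (R y))) := by
  obtain rfl : st = fun i j x y ↦ superBracket c α β i j (R x) y := by
    funext i j x y
    rw [hst, superBracket_apply, hRα, LinearEquiv.symm_apply_comm_s4 hRβ]
    rfl
  have hα' := hA.mapsTo_symm α hαe
  have hβ' := hA.mapsTo_symm β hβe
  refine ⟨fun i j x hx y hy ↦ ?_, fun i j x _ y _ ↦ ?_, fun i j x _ y _ ↦ ?_,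
    fun i j k x hx y hy z hz ↦ ?_, fun i j x hx y hy ↦ ?_⟩
  · exact superBracket_mem c α β hce hαe hα' hβe hβ' (hRe i _ hx) hy
  · simpa only [hRα] using map_superBracket c α β hαm (fun _ ↦ rfl) hcomm i j (R x) y
  · simpa only [hRβ] using
      map_superBracket c α β hβm (fun a ↦ (hcomm a).symm) (fun _ ↦ rfl) i j (R x) y
  · exact superBracket_rotaBaxter_preLie c α β hαe hα' hβe hβ' hcomm hαm hβm hpre hRe hRα hRβ hRB
      hx hy hz
  · exact superBracket_rotaBaxter c α β hαe hα' hβe hβ' hRα hRβ hRB (hRe i _ hx) hy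

theorem statement4
    (K : Type) [Field K] [CharZero K]
    (A : Type) [AddCommGroup A] [Module K A]
    (𝒜 : ZMod 2 → Submodule K A)
    (hA : DirectSum.IsInternal 𝒜)
    (c : A →ₗ[K] A →ₗ[K] A)
    (α β : A ≃ₗ[K] A)
    (hcomm : ∀ a, α (β a) = β (α a))
    (hαe : ∀ i : ZMod 2, ∀ a ∈ 𝒜 i, α a ∈ 𝒜 i)
    (hβe : ∀ i : ZMod 2, ∀ a ∈ 𝒜 i, β a ∈ 𝒜 i)
    (hce : ∀ i j : ZMod 2, ∀ x ∈ 𝒜 i, ∀ y ∈ 𝒜 j, c x y ∈ 𝒜 (i + j))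
    (hαm : ∀ a b : A, α (c a b) = c (α a) (α b))
    (hβm : ∀ a b : A, β (c a b) = c (β a) (β b))
    (hpre : ∀ i j k : ZMod 2, ∀ x ∈ 𝒜 i, ∀ y ∈ 𝒜 j, ∀ z ∈ 𝒜 k,
      c (c (β x) (α y)) (β z) - c (α (β x)) (c (α y) z)
        = ((-1 : K) ^ (i.val * j.val)) •
            (c (c (β y) (α x)) (β z) - c (α (β y)) (c (α x) z)))
    -- R is a Rota-Baxter operator of weight zero
    (R : A →ₗ[K] A)
    (hRe : ∀ i : ZMod 2, ∀ a ∈ 𝒜 i, R a ∈ 𝒜 i)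
    (hRα : ∀ a, R (α a) = α (R a))
    (hRβ : ∀ a, R (β a) = β (R a))
    (hRB : ∀ i j : ZMod 2, ∀ x ∈ 𝒜 i, ∀ y ∈ 𝒜 j,
      c (R x) (R y) = R (c (R x) y + c x (R y)))
    -- the new product `∗` (on homogeneous elements of parities `i`, `j`)
    (st : ZMod 2 → ZMod 2 → A → A → A)
    (hst : ∀ i j x y, st i j x y
      = c (R x) y
        - ((-1 : K) ^ (i.val * j.val)) • c (α.symm (β y)) (R (α (β.symm x)))) :
    -- `(A,∗,α,β)` is a BiHom-pre-Lie superalgebra: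
    (∀ i j : ZMod 2, ∀ x ∈ 𝒜 i, ∀ y ∈ 𝒜 j, st i j x y ∈ 𝒜 (i + j))
    ∧ (∀ i j : ZMod 2, ∀ x ∈ 𝒜 i, ∀ y ∈ 𝒜 j, α (st i j x y) = st i j (α x) (α y))
    ∧ (∀ i j : ZMod 2, ∀ x ∈ 𝒜 i, ∀ y ∈ 𝒜 j, β (st i j x y) = st i j (β x) (β y))
    ∧ (∀ i j k : ZMod 2, ∀ x ∈ 𝒜 i, ∀ y ∈ 𝒜 j, ∀ z ∈ 𝒜 k,
        st (i + j) k (st i j (β x) (α y)) (β z)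
          - st i (j + k) (α (β x)) (st j k (α y) z)
          = ((-1 : K) ^ (i.val * j.val)) •
              (st (j + i) k (st j i (β y) (α x)) (β z)
                - st j (i + k) (α (β y)) (st i k (α x) z)))
    -- and R is a Rota-Baxter operator of weight zero on `(A,∗,α,β)`:
    ∧ (∀ i j : ZMod 2, ∀ x ∈ 𝒜 i, ∀ y ∈ 𝒜 j,
        st i j (R x) (R y) = R (st i j (R x) y + st i j x (R y))) :=
  statement4_general K A 𝒜 hA c α β hcomm hαe hβe hce hαm hβm hpre R hRe hRα hRβ hRB st hst
end

section
/- Let (A,[·,·],α,β) be a BiHom-Lie superalgebra, let (V,ρ,α_V,β_V) be a representation of it with α_V,β_V bijective, and let T: V → A be a super O-operator of weight zero associated to (V,ρ,α_V,β_V). Then the even bilinear product u∘v = ρ(T(u))v defines a BiHom-pre-Lie superalgebra structure (V,∘,α_V,β_V) on V. -/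
/-!
STATEMENT 5: If `T` is a super O-operator of weight zero of a BiHom-Lie superalgebra
`(A,[·,·],α,β)` associated to a representation `(V,ρ,α_V,β_V)` with `α_V, β_V` bijective,
then `u∘v = ρ(T(u))v` defines a BiHom-pre-Lie superalgebra structure `(V,∘,α_V,β_V)` on `V`.
-/
theorem statement5
    (K : Type) [Field K] [CharZero K]
    (A : Type) [AddCommGroup A] [Module K A]
    (𝒜 : ZMod 2 → Submodule K A)
    (hA : DirectSum.IsInternal 𝒜)
    (br : A →ₗ[K] A →ₗ[K] A)
    (α β : A →ₗ[K] A)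
    (hcomm : ∀ a, α (β a) = β (α a))
    (hαe : ∀ i : ZMod 2, ∀ a ∈ 𝒜 i, α a ∈ 𝒜 i)
    (hβe : ∀ i : ZMod 2, ∀ a ∈ 𝒜 i, β a ∈ 𝒜 i)
    (hbre : ∀ i j : ZMod 2, ∀ x ∈ 𝒜 i, ∀ y ∈ 𝒜 j, br x y ∈ 𝒜 (i + j))
    (hαm : ∀ a b : A, α (br a b) = br (α a) (α b))
    (hβm : ∀ a b : A, β (br a b) = br (β a) (β b))
    (hskew : ∀ i j : ZMod 2, ∀ x ∈ 𝒜 i, ∀ y ∈ 𝒜 j,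
      br (β x) (α y) = -(((-1 : K) ^ (i.val * j.val)) • br (β y) (α x)))
    (hjac : ∀ i j k : ZMod 2, ∀ x ∈ 𝒜 i, ∀ y ∈ 𝒜 j, ∀ z ∈ 𝒜 k,
      ((-1 : K) ^ (i.val * k.val)) • br (β (β x)) (br (β y) (α z))
      + ((-1 : K) ^ (j.val * i.val)) • br (β (β y)) (br (β z) (α x))
      + ((-1 : K) ^ (k.val * j.val)) • br (β (β z)) (br (β x) (α y)) = 0)
    -- the representation (V,ρ,α_V,β_V)
    (V : Type) [AddCommGroup V] [Module K V]
    (𝒱 : ZMod 2 → Submodule K V)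
    (hV : DirectSum.IsInternal 𝒱)
    (ρ : A →ₗ[K] V →ₗ[K] V)
    (αV βV : V ≃ₗ[K] V)
    (hVcomm : ∀ v, αV (βV v) = βV (αV v))
    (hαVe : ∀ k : ZMod 2, ∀ v ∈ 𝒱 k, αV v ∈ 𝒱 k)
    (hβVe : ∀ k : ZMod 2, ∀ v ∈ 𝒱 k, βV v ∈ 𝒱 k)
    (hρe : ∀ i k : ZMod 2, ∀ x ∈ 𝒜 i, ∀ v ∈ 𝒱 k, ρ x v ∈ 𝒱 (i + k))
    (hρα : ∀ x v, ρ (α x) (αV v) = αV (ρ x v))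
    (hρβ : ∀ x v, ρ (β x) (βV v) = βV (ρ x v))
    (hρbr : ∀ i j : ZMod 2, ∀ x ∈ 𝒜 i, ∀ y ∈ 𝒜 j, ∀ v : V,
      ρ (br (β x) y) (βV v)
        = ρ (α (β x)) (ρ y v)
          - ((-1 : K) ^ (i.val * j.val)) • ρ (β y) (ρ (α x) v))
    -- T is a super O-operator of weight zero
    (T : V →ₗ[K] A)
    (hTe : ∀ k : ZMod 2, ∀ v ∈ 𝒱 k, T v ∈ 𝒜 k)
    (hTα : ∀ v, T (αV v) = α (T v))
    (hTβ : ∀ v, T (βV v) = β (T v))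
    (hT : ∀ i j : ZMod 2, ∀ u ∈ 𝒱 i, ∀ v ∈ 𝒱 j,
      br (T u) (T v)
        = T (ρ (T u) v
            - ((-1 : K) ^ (i.val * j.val)) •
                ρ (T (αV.symm (βV v))) (αV (βV.symm u))))
    -- the product u∘v = ρ(T(u))v
    (m : V → V → V) (hm : ∀ u v, m u v = ρ (T u) v) :
    -- `(V,∘,α_V,β_V)` is a BiHom-pre-Lie superalgebra:
    (∀ i j : ZMod 2, ∀ u ∈ 𝒱 i, ∀ v ∈ 𝒱 j, m u v ∈ 𝒱 (i + j))
    ∧ (∀ u v : V, αV (m u v) = m (αV u) (αV v))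
    ∧ (∀ u v : V, βV (m u v) = m (βV u) (βV v))
    ∧ (∀ i j k : ZMod 2, ∀ u ∈ 𝒱 i, ∀ v ∈ 𝒱 j, ∀ w ∈ 𝒱 k,
        m (m (βV u) (αV v)) (βV w) - m (αV (βV u)) (m (αV v) w)
          = ((-1 : K) ^ (i.val * j.val)) •
              (m (m (βV v) (αV u)) (βV w) - m (αV (βV v)) (m (αV u) w))) := by

  refine ⟨?_, ?_, ?_, ?_⟩
  · intro i j u hu v hv
    rw [hm]
    exact hρe i j _ (hTe i u hu) v hv
  · intro u v
    rw [hm, hm, hTα, hρα]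
  · intro u v
    rw [hm, hm, hTβ, hρβ]
  · intro i j k u hu v hv w hw
    simp only [hm, hTα, hTβ]
    set ε : K := (-1 : K) ^ (i.val * j.val) with hε
    have heps : ε * ε = 1 := by
      rw [hε, ← pow_add]
      exact Even.neg_one_pow ⟨_, rfl⟩
    -- key identity from the O-operator condition applied to (βV v, αV u)
    have e2 := hT j i (βV v) (hβVe j v hv) (αV u) (hαVe i u hu)
    have hs1 : αV.symm (βV (αV u)) = βV u := by
      rw [← hVcomm, αV.symm_apply_apply]
    rw [hs1, βV.symm_apply_apply, Nat.mul_comm j.val i.val, ← hε] at e2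
    have e2' := congrArg (fun x => ρ x (βV w)) e2
    simp only [map_sub, map_smul, LinearMap.sub_apply, LinearMap.smul_apply,
      hTα, hTβ] at e2'
    -- representation identity applied with x = T v, y = α (T u)
    have r2 := hρbr j i (T v) (hTe j v hv) (α (T u)) (hαe i _ (hTe i u hu)) w
    rw [Nat.mul_comm j.val i.val, ← hε] at r2
    have key := e2'.symm.trans r2
    -- abbreviations
    set A1 : V := ρ (T (ρ (β (T u)) (αV v))) (βV w) with hA1
    set A2 : V := ρ (T (ρ (β (T v)) (αV u))) (βV w) with hA2
    set B1 : V := ρ (β (α (T u))) (ρ (α (T v)) w) with hB1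
    set B2 : V := ρ (α (β (T v))) (ρ (α (T u)) w) with hB2
    -- goal terms use α (β ·); normalize with hcomm
    have hgoal1 : ρ (α (β (T u))) (ρ (α (T v)) w) = B1 := by rw [hB1, hcomm]
    rw [hgoal1]
    -- key : A2 - ε • A1 = B2 - ε • B1
    have h1 : A2 - B2 = ε • (A1 - B1) := by
      linear_combination (norm := module) key
    calc A1 - B1 = (ε * ε) • (A1 - B1) := by rw [heps, one_smul]
      _ = ε • (ε • (A1 - B1)) := by rw [mul_smul]
      _ = ε • (A2 - B2) := by rw [h1]
end

section
/- Let (A,μ,α,β) be a BiHom-Lie admissible superalgebra with α,β bijective, with associated supercommutator bracket [x,y] = μ(x,y) − (−1)^{|x||y|}μ(α⁻¹β(y),αβ⁻¹(x)), and let R: A → A be an even linear map commuting with α and β such that μ(R(x),R(y)) = R(μ(R(x),y) + μ(x,R(y))) for all homogeneous x,y (a Rota-Baxter operator of weight zero on (A,μ,α,β)). Then the even product x∗y = [R(x),y] makes (A,∗,α,β) a BiHom-pre-Lie superalgebra. -/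
/-!
STATEMENT 6: If `(A,μ,α,β)` is a BiHom-Lie admissible superalgebra (with `α, β` bijective)
with supercommutator bracket `[x,y] = μ(x,y) − (−1)^{|x||y|}μ(α⁻¹β(y),αβ⁻¹(x))`, and `R` is
a Rota-Baxter operator of weight zero on `(A,μ,α,β)`, then `x∗y = [R(x),y]` makes
`(A,∗,α,β)` a BiHom-pre-Lie superalgebra.
-/
set_option maxHeartbeats 4000000 in
theorem statement6
    (K : Type) [Field K] [CharZero K]
    (A : Type) [AddCommGroup A] [Module K A]
    (𝒜 : ZMod 2 → Submodule K A)
    (hA : DirectSum.IsInternal 𝒜)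
    (μ : A →ₗ[K] A →ₗ[K] A)
    (α β : A ≃ₗ[K] A)
    (hcomm : ∀ a, α (β a) = β (α a))
    (hαe : ∀ i : ZMod 2, ∀ a ∈ 𝒜 i, α a ∈ 𝒜 i)
    (hβe : ∀ i : ZMod 2, ∀ a ∈ 𝒜 i, β a ∈ 𝒜 i)
    (hμe : ∀ i j : ZMod 2, ∀ a ∈ 𝒜 i, ∀ b ∈ 𝒜 j, μ a b ∈ 𝒜 (i + j))
    (hαm : ∀ a b : A, α (μ a b) = μ (α a) (α b))
    (hβm : ∀ a b : A, β (μ a b) = μ (β a) (β b))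
    -- the supercommutator bracket
    (br : ZMod 2 → ZMod 2 → A → A → A)
    (hbr : ∀ i j x y, br i j x y
      = μ x y - ((-1 : K) ^ (i.val * j.val)) • μ (α.symm (β y)) (α (β.symm x)))
    -- BiHom-Lie admissibility: the bracket satisfies the BiHom super-Jacobi identity
    (hjac : ∀ i j k : ZMod 2, ∀ x ∈ 𝒜 i, ∀ y ∈ 𝒜 j, ∀ z ∈ 𝒜 k,
      ((-1 : K) ^ (i.val * k.val)) • br i (j + k) (β (β x)) (br j k (β y) (α z))
      + ((-1 : K) ^ (j.val * i.val)) • br j (k + i) (β (β y)) (br k i (β z) (α x))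
      + ((-1 : K) ^ (k.val * j.val)) • br k (i + j) (β (β z)) (br i j (β x) (α y)) = 0)
    -- R is a Rota-Baxter operator of weight zero on (A,μ,α,β)
    (R : A →ₗ[K] A)
    (hRe : ∀ i : ZMod 2, ∀ a ∈ 𝒜 i, R a ∈ 𝒜 i)
    (hRα : ∀ a, R (α a) = α (R a))
    (hRβ : ∀ a, R (β a) = β (R a))
    (hRB : ∀ i j : ZMod 2, ∀ x ∈ 𝒜 i, ∀ y ∈ 𝒜 j,
      μ (R x) (R y) = R (μ (R x) y + μ x (R y)))
    -- the product x∗y = [R(x),y]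
    (st : ZMod 2 → ZMod 2 → A → A → A)
    (hst : ∀ i j x y, st i j x y = br i j (R x) y) :
    -- `(A,∗,α,β)` is a BiHom-pre-Lie superalgebra:
    (∀ i j : ZMod 2, ∀ x ∈ 𝒜 i, ∀ y ∈ 𝒜 j, st i j x y ∈ 𝒜 (i + j))
    ∧ (∀ i j : ZMod 2, ∀ x ∈ 𝒜 i, ∀ y ∈ 𝒜 j, α (st i j x y) = st i j (α x) (α y))
    ∧ (∀ i j : ZMod 2, ∀ x ∈ 𝒜 i, ∀ y ∈ 𝒜 j, β (st i j x y) = st i j (β x) (β y))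
    ∧ (∀ i j k : ZMod 2, ∀ x ∈ 𝒜 i, ∀ y ∈ 𝒜 j, ∀ z ∈ 𝒜 k,
        st (i + j) k (st i j (β x) (α y)) (β z)
          - st i (j + k) (α (β x)) (st j k (α y) z)
          = ((-1 : K) ^ (i.val * j.val)) •
              (st (j + i) k (st j i (β y) (α x)) (β z)
                - st j (i + k) (α (β y)) (st i k (α x) z))) := by
  -- commutation helpers
  have hc1 : ∀ a, α (β.symm a) = β.symm (α a) := fun a => by
    apply β.injective
    rw [β.apply_symm_apply, ← hcomm, β.apply_symm_apply]
  have hc2 : ∀ a, α.symm (β a) = β (α.symm a) := fun a => by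
    apply α.injective
    rw [α.apply_symm_apply, hcomm, α.apply_symm_apply]
  have hc3 : ∀ a, α.symm (β.symm a) = β.symm (α.symm a) := fun a => by
    apply α.injective
    rw [α.apply_symm_apply, hc1, α.apply_symm_apply]
  have hαR : ∀ a, α (R a) = R (α a) := fun a => (hRα a).symm
  have hβR : ∀ a, β (R a) = R (β a) := fun a => (hRβ a).symm
  have hαR' : ∀ a, α.symm (R a) = R (α.symm a) := fun a => by
    apply α.injective
    rw [α.apply_symm_apply, hαR, α.apply_symm_apply]
  have hβR' : ∀ a, β.symm (R a) = R (β.symm a) := fun a => by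
    apply β.injective
    rw [β.apply_symm_apply, hβR, β.apply_symm_apply]
  have hαm' : ∀ a b, α.symm (μ a b) = μ (α.symm a) (α.symm b) := fun a b => by
    apply α.injective
    rw [α.apply_symm_apply, hαm, α.apply_symm_apply, α.apply_symm_apply]
  have hβm' : ∀ a b, β.symm (μ a b) = μ (β.symm a) (β.symm b) := fun a b => by
    apply β.injective
    rw [β.apply_symm_apply, hβm, β.apply_symm_apply, β.apply_symm_apply]
  -- inverses of grading-preserving equivalences preserve the grading
  have hsymm : ∀ (f : A ≃ₗ[K] A), (∀ i : ZMod 2, ∀ a ∈ 𝒜 i, f a ∈ 𝒜 i) →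
      ∀ i : ZMod 2, ∀ a ∈ 𝒜 i, f.symm a ∈ 𝒜 i := by
    intro f hf i a ha
    have htop : f.symm a ∈ 𝒜 0 ⊔ 𝒜 1 := by
      have h1 : (⊤ : Submodule K A) ≤ 𝒜 0 ⊔ 𝒜 1 := by
        rw [← hA.submodule_iSup_eq_top]
        exact iSup_le fun j => by fin_cases j <;> [exact le_sup_left; exact le_sup_right]
      exact h1 Submodule.mem_top
    rcases Submodule.mem_sup.mp htop with ⟨b0, hb0, b1, hb1, hsum⟩
    have hdisj : Disjoint (𝒜 0) (𝒜 1) :=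
      hA.submodule_iSupIndep.pairwiseDisjoint (show (0 : ZMod 2) ≠ 1 by decide)
    have hfa : f b0 + f b1 = a := by rw [← map_add, hsum, f.apply_symm_apply]
    fin_cases i
    · have h1 : f b1 ∈ 𝒜 0 := by
        have : f b1 = a - f b0 := by rw [← hfa]; abel
        rw [this]; exact sub_mem ha (hf 0 _ hb0)
      have h0 : f b1 = 0 := (Submodule.disjoint_def.mp hdisj) _ h1 (hf 1 _ hb1)
      have hb10 : b1 = 0 := f.injective (by rw [h0, map_zero])
      have : f.symm a = b0 := by rw [← hsum, hb10, add_zero]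
      rw [this]; exact hb0
    · have h1 : f b0 ∈ 𝒜 1 := by
        have : f b0 = a - f b1 := by rw [← hfa]; abel
        rw [this]; exact sub_mem ha (hf 1 _ hb1)
      have h0 : f b0 = 0 := (Submodule.disjoint_def.mp hdisj) _ (hf 0 _ hb0) h1
      have hb00 : b0 = 0 := f.injective (by rw [h0, map_zero])
      have : f.symm a = b1 := by rw [← hsum, hb00, zero_add]
      rw [this]; exact hb1
  have hαe' := hsymm α hαe
  have hβe' := hsymm β hβe
  refine ⟨?_, ?_, ?_, ?_⟩
  · -- grading
    intro i j x hx y hy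
    rw [hst, hbr]
    refine sub_mem (hμe i j _ (hRe i x hx) y hy) (Submodule.smul_mem _ _ ?_)
    have h := hμe j i _ (hαe' j _ (hβe j y hy)) _ (hαe i _ (hβe' i _ (hRe i x hx)))
    rwa [add_comm j i] at h
  · -- α-multiplicativity
    intro i j x hx y hy
    rw [hst, hst, hbr, hbr]
    simp only [map_sub, map_smul, hαm, hαm', hβm, hβm', hc1, hc2, hc3, hcomm,
      hαR, hβR, hαR', hβR', LinearEquiv.apply_symm_apply, LinearEquiv.symm_apply_apply]
  · -- β-multiplicativity
    intro i j x hx y hy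
    rw [hst, hst, hbr, hbr]
    simp only [map_sub, map_smul, hαm, hαm', hβm, hβm', hc1, hc2, hc3, hcomm,
      hαR, hβR, hαR', hβR', LinearEquiv.apply_symm_apply, LinearEquiv.symm_apply_apply]
  · -- the BiHom-pre-Lie identity
    intro i j k x hx y hy z hz
    have rb1 := hRB i j (β x) (hβe i x hx) (α y) (hαe j y hy)
    have rb2 := hRB j i (β y) (hβe j y hy) (α x) (hαe i x hx)
    have rb1a := congrArg (fun w => μ w (β z)) rb1
    have rb1b := congrArg (fun w => μ (α.symm (β (β z))) (α (β.symm w))) rb1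
    have rb2a := congrArg (fun w => μ w (β z)) rb2
    have rb2b := congrArg (fun w => μ (α.symm (β (β z))) (α (β.symm w))) rb2
    have jac := hjac i j k (α (β.symm (R x))) (hαe i _ (hβe' i _ (hRe i x hx)))
      (α (β.symm (R y))) (hαe j _ (hβe' j _ (hRe j y hy)))
      (α.symm z) (hαe' k z hz)
    clear rb1 rb2
    simp only [hst, hbr]
    simp only [hbr] at jac
    simp only [map_add, map_sub, map_smul, LinearMap.add_apply, LinearMap.sub_apply,
      LinearMap.smul_apply, hαm, hαm', hβm, hβm', hc1, hc2, hc3,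
      hcomm, hαR, hβR, hαR', hβR', LinearEquiv.apply_symm_apply,
      LinearEquiv.symm_apply_apply] at rb1a rb1b rb2a rb2b jac ⊢
    have v0 : (0 : ZMod 2).val = 0 := rfl
    have v1 : (1 : ZMod 2).val = 1 := rfl
    have w00 : (0 : ZMod 2) + 0 = 0 := rfl
    have w01 : (0 : ZMod 2) + 1 = 1 := rfl
    have w10 : (1 : ZMod 2) + 0 = 1 := rfl
    have w11 : (1 : ZMod 2) + 1 = 0 := rfl
    have hcase : ∀ m : ZMod 2, m = 0 ∨ m = 1 := by decide
    rcases hcase i with rfl | rfl <;> rcases hcase j with rfl | rfl <;>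
        rcases hcase k with rfl | rfl <;>
      simp only [w00, w01, w10, w11, v0, v1, Nat.mul_zero, Nat.zero_mul,
        Nat.mul_one, Nat.one_mul, pow_zero, pow_one, one_smul, neg_smul, neg_neg,
        sub_neg_eq_add] at rb1a rb1b rb2a rb2b jac ⊢ <;>
      first
        | linear_combination (norm := module) (-1 : K) • jac - rb1a + rb1b + rb2a - rb2b
        | linear_combination (norm := module) (1 : K) • jac - rb1a + rb1b + rb2a - rb2b
        | linear_combination (norm := module) (-1 : K) • jac - rb1a - rb1b + rb2a + rb2b
        | linear_combination (norm := module) (1 : K) • jac - rb1a - rb1b + rb2a + rb2b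
        | linear_combination (norm := module) (-1 : K) • jac - rb1a + rb1b - rb2a + rb2b
        | linear_combination (norm := module) (1 : K) • jac - rb1a + rb1b - rb2a + rb2b
        | linear_combination (norm := module) (-1 : K) • jac - rb1a - rb1b - rb2a - rb2b
        | linear_combination (norm := module) (1 : K) • jac - rb1a - rb1b - rb2a - rb2b
end

section
/- Let (A,·,α,β) be a BiHom-associative superalgebra with α,β bijective and let R be a Rota-Baxter operator of weight −1 on it, i.e. R(x)·R(y) = R(R(x)·y + x·R(y) − x·y) for all homogeneous x,y. Define the even product x∘y = R(x)·y − (−1)^{|x||y|}(α⁻¹β(y))·R(αβ⁻¹(x)) − x·y. Then (A,∘,α,β) is a BiHom-pre-Lie superalgebra. -/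
/-!
Expanding the BiHom associator `(βx ∘ αy) ∘ βz − αβx ∘ (αy ∘ z)` with BiHom-associativity and
the Rota–Baxter identity, every term either cancels or is matched, up to the sign
`(−1)^{|x||y|}`, by the corresponding term of the associator with `x` and `y` exchanged.
The grading enters only through the Koszul signs, which are multiplicative in each parity.
Since the Rota–Baxter identity is bilinear, it holds for all elements once it holds for
homogeneous ones, so the computation itself is ungraded, with the signs as parameters.
-/

open Function

theorem Function.Semiconj₂.inverse_left {α β : Type*} {f : α → β} {f' : β → α}
    {ga : α → α → α} {gb : β → β → β} (h : Semiconj₂ f ga gb)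
    (hf₁ : LeftInverse f' f) (hf₂ : RightInverse f' f) : Semiconj₂ f' gb ga := fun x y ↦ by
  rw [← hf₁.injective.eq_iff, h, hf₂, hf₂, hf₂]

theorem ZMod.neg_one_pow_val_add_mul {R : Type*} [Ring R] (i j k : ZMod 2) :
    (-1 : R) ^ ((i + j).val * k.val) = (-1) ^ (i.val * k.val) * (-1) ^ (j.val * k.val) := by
  rw [← pow_add, ← add_mul, ZMod.val_add, neg_one_pow_eq_pow_mod_two, Nat.mod_mul_mod,
    ← neg_one_pow_eq_pow_mod_two]

theorem ZMod.neg_one_pow_val_mul_add {R : Type*} [Ring R] (i j k : ZMod 2) :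
    (-1 : R) ^ (i.val * (j + k).val) = (-1) ^ (i.val * j.val) * (-1) ^ (i.val * k.val) := by
  simp only [Nat.mul_comm i.val, neg_one_pow_val_add_mul]

namespace DirectSum.IsInternal

variable {K A ι : Type*} [CommRing K] [AddCommGroup A] [Module K A] [DecidableEq ι]
  {𝒜 : ι → Submodule K A}

theorem symm_mem_s7 (h : IsInternal 𝒜) {f : A ≃ₗ[K] A} (hf : ∀ i, ∀ a ∈ 𝒜 i, f a ∈ 𝒜 i)
    {i : ι} {a : A} (ha : a ∈ 𝒜 i) : f.symm a ∈ 𝒜 i := by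
  have hb : f.symm a ∈ 𝒜 i ⊔ ⨆ (j) (_ : j ≠ i), 𝒜 j := by
    rw [← iSup_split_single, h.submodule_iSup_eq_top]; exact Submodule.mem_top
  obtain ⟨c, hc, d, hd, hcd⟩ := Submodule.mem_sup.mp hb
  have hfd : f d ∈ ⨆ (j) (_ : j ≠ i), 𝒜 j := by
    have hle : ⨆ (j) (_ : j ≠ i), 𝒜 j ≤ (⨆ (j) (_ : j ≠ i), 𝒜 j).comap f.toLinearMap :=
      iSup₂_le fun j hj b hb ↦ le_iSup₂ (f := fun j (_ : j ≠ i) ↦ 𝒜 j) j hj (hf j b hb)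
    exact hle hd
  have hfd' : f d ∈ 𝒜 i := by
    rw [show f d = a - f c by rw [← f.apply_symm_apply a, ← hcd, map_add, add_sub_cancel_left]]
    exact sub_mem ha (hf i c hc)
  have hd0 : d = 0 :=
    f.map_eq_zero_iff.mp (Submodule.disjoint_def.mp (h.submodule_iSupIndep i) _ hfd' hfd)
  rwa [← hcd, hd0, add_zero]

theorem bilinear_ext {M : Type*} [AddCommMonoid M] [Module K M] (h : IsInternal 𝒜)
    {B₁ B₂ : A →ₗ[K] A →ₗ[K] M} (hB : ∀ i j, ∀ x ∈ 𝒜 i, ∀ y ∈ 𝒜 j, B₁ x y = B₂ x y) :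
    B₁ = B₂ := by
  have hspan : Submodule.span K (⋃ i, (𝒜 i : Set A)) = ⊤ := by
    rw [← Submodule.iSup_eq_span, h.submodule_iSup_eq_top]
  refine LinearMap.ext_on hspan fun x hx ↦ LinearMap.ext_on hspan fun y hy ↦ ?_
  obtain ⟨i, hx⟩ := Set.mem_iUnion.mp hx
  obtain ⟨j, hy⟩ := Set.mem_iUnion.mp hy
  exact hB i j x hx y hy

theorem rotaBaxter_of_homogeneous {μ : A →ₗ[K] A →ₗ[K] A} {R : A →ₗ[K] A} (h : IsInternal 𝒜)
    (hRB : ∀ i j, ∀ x ∈ 𝒜 i, ∀ y ∈ 𝒜 j, μ (R x) (R y) = R (μ (R x) y + μ x (R y) - μ x y))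
    (x y : A) : μ (R x) (R y) = R (μ (R x) y + μ x (R y) - μ x y) :=
  LinearMap.congr_fun₂ (h.bilinear_ext (B₁ := μ.compl₁₂ R R)
    (B₂ := (μ.compl₁₂ R LinearMap.id + μ.compl₁₂ LinearMap.id R - μ).compr₂ R) hRB) x y

end DirectSum.IsInternal

section BiHom

variable {K A : Type*} [Field K] [AddCommGroup A] [Module K A]
  (μ : A →ₗ[K] A →ₗ[K] A) (α β : A ≃ₗ[K] A) (R : A →ₗ[K] A)

def rotaBaxterPreLieMul (ε : K) (x y : A) : A :=
  μ (R x) y - ε • μ (α.symm (β y)) (R (α (β.symm x))) - μ x y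

variable {μ α β R}

theorem rotaBaxterPreLieMul_mem {ι : Type*} [AddCommMagma ι] {𝒜 : ι → Submodule K A}
    (hα : ∀ i, ∀ a ∈ 𝒜 i, α a ∈ 𝒜 i) (hαs : ∀ i, ∀ a ∈ 𝒜 i, α.symm a ∈ 𝒜 i)
    (hβ : ∀ i, ∀ a ∈ 𝒜 i, β a ∈ 𝒜 i) (hβs : ∀ i, ∀ a ∈ 𝒜 i, β.symm a ∈ 𝒜 i)
    (hμ : ∀ i j, ∀ a ∈ 𝒜 i, ∀ b ∈ 𝒜 j, μ a b ∈ 𝒜 (i + j)) (hR : ∀ i, ∀ a ∈ 𝒜 i, R a ∈ 𝒜 i)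
    (ε : K) {i j : ι} {x y : A} (hx : x ∈ 𝒜 i) (hy : y ∈ 𝒜 j) :
    rotaBaxterPreLieMul μ α β R ε x y ∈ 𝒜 (i + j) := by
  have htwist : μ (α.symm (β y)) (R (α (β.symm x))) ∈ 𝒜 (i + j) :=
    add_comm j i ▸ hμ j i _ (hαs j _ (hβ j y hy)) _ (hR i _ (hα i _ (hβs i x hx)))
  exact sub_mem (sub_mem (hμ i j _ (hR i x hx) y hy) (Submodule.smul_mem _ ε htwist))
    (hμ i j x hx y hy)

theorem map_rotaBaxterPreLieMul {γ : A ≃ₗ[K] A} (hγα : ∀ a, α (γ a) = γ (α a))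
    (hγβ : ∀ a, β (γ a) = γ (β a)) (hγm : ∀ a b : A, γ (μ a b) = μ (γ a) (γ b))
    (hγR : ∀ a, R (γ a) = γ (R a)) (ε : K) (x y : A) :
    γ (rotaBaxterPreLieMul μ α β R ε x y) = rotaBaxterPreLieMul μ α β R ε (γ x) (γ y) := by
  have hγαs : ∀ a, α.symm (γ a) = γ (α.symm a) :=
    Semiconj.inverse_left hγα α.symm_apply_apply α.apply_symm_apply
  have hγβs : ∀ a, β.symm (γ a) = γ (β.symm a) :=
    Semiconj.inverse_left hγβ β.symm_apply_apply β.apply_symm_apply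
  simp only [rotaBaxterPreLieMul, map_sub, map_smul, hγm, ← hγR, ← hγα, ← hγβ, ← hγαs, ← hγβs]

-- For homogeneous `x, y, z`, the signs `ea, eb, ec` stand for `(−1)^{|x||y|}`, `(−1)^{|x||z|}`
-- and `(−1)^{|y||z|}`.
local notation:70 x " ∘[" ε "] " y:71 => rotaBaxterPreLieMul μ α β R ε x y

theorem rotaBaxterPreLieMul_assoc_swap
    (hcomm : ∀ a, α (β a) = β (α a))
    (hαm : ∀ a b : A, α (μ a b) = μ (α a) (α b))
    (hβm : ∀ a b : A, β (μ a b) = μ (β a) (β b))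
    (hass : ∀ a b c : A, μ (α a) (μ b c) = μ (μ a b) (β c))
    (hRα : ∀ a, R (α a) = α (R a)) (hRβ : ∀ a, R (β a) = β (R a))
    (hRB : ∀ a b, μ (R a) (R b) = R (μ (R a) b + μ a (R b) - μ a b))
    {ea eb ec : K} (hea : ea * ea = 1) (x y z : A) :
    (β x ∘[ea] α y) ∘[eb * ec] β z - α (β x) ∘[ea * eb] (α y ∘[ec] z)
      = ea • ((β y ∘[ea] α x) ∘[ec * eb] β z - α (β y) ∘[ea * ec] (α x ∘[eb] z)) := by
  have hαsm : ∀ a b : A, α.symm (μ a b) = μ (α.symm a) (α.symm b) :=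
    Semiconj₂.inverse_left (ga := fun a b ↦ μ a b) (gb := fun a b ↦ μ a b) hαm
      α.symm_apply_apply α.apply_symm_apply
  have hβsm : ∀ a b : A, β.symm (μ a b) = μ (β.symm a) (β.symm b) :=
    Semiconj₂.inverse_left (ga := fun a b ↦ μ a b) (gb := fun a b ↦ μ a b) hβm
      β.symm_apply_apply β.apply_symm_apply
  have hαsR : ∀ a, α.symm (R a) = R (α.symm a) :=
    Semiconj.inverse_left (fun a ↦ (hRα a).symm) α.symm_apply_apply α.apply_symm_apply
  have hβsR : ∀ a, β.symm (R a) = R (β.symm a) :=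
    Semiconj.inverse_left (fun a ↦ (hRβ a).symm) β.symm_apply_apply β.apply_symm_apply
  have hβαs : ∀ a, β (α.symm a) = α.symm (β a) := fun a ↦
    (Semiconj.inverse_left hcomm α.symm_apply_apply α.apply_symm_apply a).symm
  have hβsα : ∀ a, β.symm (α a) = α (β.symm a) :=
    Semiconj.inverse_left (fun a ↦ (hcomm a).symm) β.symm_apply_apply β.apply_symm_apply
  -- Each associator is expanded by seven instances of BiHom-associativity and two of the
  -- Rota–Baxter identity; the remaining terms cancel in pairs because `ea * ea = 1`.
  linear_combination (norm := skip)
      hass (R (β x)) (α y) z - hass (R (β x)) (R (α y)) z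
      + ec • hass (R (β x)) (α.symm (β z)) (R (α (α (β.symm y))))
      + hass (β x) (R (α y)) z - hass (β x) (α y) z
      - ec • hass (β x) (α.symm (β z)) (R (α (α (β.symm y))))
      - congrArg (μ · (β z)) (hRB (β x) (α y))
      + (ea * eb * ec) • hass (α.symm (α.symm (β (β z)))) (R (α y)) (R (α (α (β.symm x))))
      - (ea * eb * ec) • congrArg (μ (α.symm (β (β z)))) (hRB (α y) (α (α (β.symm x))))
      - ea • (hass (R (β y)) (α x) z - hass (R (β y)) (R (α x)) z
      + eb • hass (R (β y)) (α.symm (β z)) (R (α (α (β.symm x))))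
      + hass (β y) (R (α x)) z - hass (β y) (α x) z
      - eb • hass (β y) (α.symm (β z)) (R (α (α (β.symm x))))
      - congrArg (μ · (β z)) (hRB (β y) (α x))
      + (ea * ec * eb) • hass (α.symm (α.symm (β (β z)))) (R (α x)) (R (α (α (β.symm y))))
      - (ea * ec * eb) • congrArg (μ (α.symm (β (β z)))) (hRB (α x) (α (α (β.symm y)))))
  simp only [rotaBaxterPreLieMul, map_add, map_sub, map_smul, LinearMap.add_apply,
    LinearMap.sub_apply, LinearMap.smul_apply, hαm, hβm, hαsm, hβsm, ← hRα, ← hRβ, hαsR, hβsR,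
    ← hcomm, hβαs, hβsα, LinearEquiv.apply_symm_apply, LinearEquiv.symm_apply_apply]
  obtain rfl | rfl := mul_self_eq_one_iff.mp hea <;> module

end BiHom

theorem statement7_general
    (K : Type) [Field K]
    (A : Type) [AddCommGroup A] [Module K A]
    (𝒜 : ZMod 2 → Submodule K A)
    (hA : DirectSum.IsInternal 𝒜)
    (μ : A →ₗ[K] A →ₗ[K] A)
    (α β : A ≃ₗ[K] A)
    (hcomm : ∀ a, α (β a) = β (α a))
    (hαe : ∀ i : ZMod 2, ∀ a ∈ 𝒜 i, α a ∈ 𝒜 i)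
    (hβe : ∀ i : ZMod 2, ∀ a ∈ 𝒜 i, β a ∈ 𝒜 i)
    (hμe : ∀ i j : ZMod 2, ∀ a ∈ 𝒜 i, ∀ b ∈ 𝒜 j, μ a b ∈ 𝒜 (i + j))
    (hαm : ∀ a b : A, α (μ a b) = μ (α a) (α b))
    (hβm : ∀ a b : A, β (μ a b) = μ (β a) (β b))
    (hass : ∀ a b c : A, μ (α a) (μ b c) = μ (μ a b) (β c))
    -- R is a Rota-Baxter operator of weight −1
    (R : A →ₗ[K] A)
    (hRe : ∀ i : ZMod 2, ∀ a ∈ 𝒜 i, R a ∈ 𝒜 i)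
    (hRα : ∀ a, R (α a) = α (R a))
    (hRβ : ∀ a, R (β a) = β (R a))
    (hRB : ∀ i j : ZMod 2, ∀ x ∈ 𝒜 i, ∀ y ∈ 𝒜 j,
      μ (R x) (R y) = R (μ (R x) y + μ x (R y) - μ x y))
    -- the product ∘
    (m : ZMod 2 → ZMod 2 → A → A → A)
    (hm : ∀ i j x y, m i j x y
      = μ (R x) y
        - ((-1 : K) ^ (i.val * j.val)) • μ (α.symm (β y)) (R (α (β.symm x)))
        - μ x y) :
    -- `(A,∘,α,β)` is a BiHom-pre-Lie superalgebra:
    (∀ i j : ZMod 2, ∀ x ∈ 𝒜 i, ∀ y ∈ 𝒜 j, m i j x y ∈ 𝒜 (i + j))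
    ∧ (∀ i j : ZMod 2, ∀ x ∈ 𝒜 i, ∀ y ∈ 𝒜 j, α (m i j x y) = m i j (α x) (α y))
    ∧ (∀ i j : ZMod 2, ∀ x ∈ 𝒜 i, ∀ y ∈ 𝒜 j, β (m i j x y) = m i j (β x) (β y))
    ∧ (∀ i j k : ZMod 2, ∀ x ∈ 𝒜 i, ∀ y ∈ 𝒜 j, ∀ z ∈ 𝒜 k,
        m (i + j) k (m i j (β x) (α y)) (β z)
          - m i (j + k) (α (β x)) (m j k (α y) z)
          = ((-1 : K) ^ (i.val * j.val)) •
              (m (j + i) k (m j i (β y) (α x)) (β z)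
                - m j (i + k) (α (β y)) (m i k (α x) z))) := by
  obtain rfl : m = fun i j ↦ rotaBaxterPreLieMul μ α β R ((-1 : K) ^ (i.val * j.val)) := by
    funext i j x y; exact hm i j x y
  refine ⟨fun i j x hx y hy ↦ ?_, fun i j x _ y _ ↦ ?_, fun i j x _ y _ ↦ ?_,
    fun i j k x _ y _ z _ ↦ ?_⟩
  · exact rotaBaxterPreLieMul_mem hαe (fun _ _ ↦ hA.symm_mem_s7 hαe) hβe
      (fun _ _ ↦ hA.symm_mem_s7 hβe) hμe hRe _ hx hy
  · exact map_rotaBaxterPreLieMul (fun _ ↦ rfl) (fun a ↦ (hcomm a).symm) hαm hRα _ x y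
  · exact map_rotaBaxterPreLieMul hcomm (fun _ ↦ rfl) hβm hRβ _ x y
  · simp only [ZMod.neg_one_pow_val_add_mul, ZMod.neg_one_pow_val_mul_add,
      Nat.mul_comm j.val i.val]
    exact rotaBaxterPreLieMul_assoc_swap hcomm hαm hβm hass hRα hRβ
      (hA.rotaBaxter_of_homogeneous hRB) (mul_self_eq_one_iff.mpr (neg_one_pow_eq_or K _)) x y z

theorem statement7
    (K : Type) [Field K] [CharZero K]
    (A : Type) [AddCommGroup A] [Module K A]
    (𝒜 : ZMod 2 → Submodule K A)
    (hA : DirectSum.IsInternal 𝒜)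
    (μ : A →ₗ[K] A →ₗ[K] A)
    (α β : A ≃ₗ[K] A)
    (hcomm : ∀ a, α (β a) = β (α a))
    (hαe : ∀ i : ZMod 2, ∀ a ∈ 𝒜 i, α a ∈ 𝒜 i)
    (hβe : ∀ i : ZMod 2, ∀ a ∈ 𝒜 i, β a ∈ 𝒜 i)
    (hμe : ∀ i j : ZMod 2, ∀ a ∈ 𝒜 i, ∀ b ∈ 𝒜 j, μ a b ∈ 𝒜 (i + j))
    (hαm : ∀ a b : A, α (μ a b) = μ (α a) (α b))
    (hβm : ∀ a b : A, β (μ a b) = μ (β a) (β b))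
    (hass : ∀ a b c : A, μ (α a) (μ b c) = μ (μ a b) (β c))
    -- R is a Rota-Baxter operator of weight −1
    (R : A →ₗ[K] A)
    (hRe : ∀ i : ZMod 2, ∀ a ∈ 𝒜 i, R a ∈ 𝒜 i)
    (hRα : ∀ a, R (α a) = α (R a))
    (hRβ : ∀ a, R (β a) = β (R a))
    (hRB : ∀ i j : ZMod 2, ∀ x ∈ 𝒜 i, ∀ y ∈ 𝒜 j,
      μ (R x) (R y) = R (μ (R x) y + μ x (R y) - μ x y))
    -- the product ∘
    (m : ZMod 2 → ZMod 2 → A → A → A)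
    (hm : ∀ i j x y, m i j x y
      = μ (R x) y
        - ((-1 : K) ^ (i.val * j.val)) • μ (α.symm (β y)) (R (α (β.symm x)))
        - μ x y) :
    -- `(A,∘,α,β)` is a BiHom-pre-Lie superalgebra:
    (∀ i j : ZMod 2, ∀ x ∈ 𝒜 i, ∀ y ∈ 𝒜 j, m i j x y ∈ 𝒜 (i + j))
    ∧ (∀ i j : ZMod 2, ∀ x ∈ 𝒜 i, ∀ y ∈ 𝒜 j, α (m i j x y) = m i j (α x) (α y))
    ∧ (∀ i j : ZMod 2, ∀ x ∈ 𝒜 i, ∀ y ∈ 𝒜 j, β (m i j x y) = m i j (β x) (β y))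
    ∧ (∀ i j k : ZMod 2, ∀ x ∈ 𝒜 i, ∀ y ∈ 𝒜 j, ∀ z ∈ 𝒜 k,
        m (i + j) k (m i j (β x) (α y)) (β z)
          - m i (j + k) (α (β x)) (m j k (α y) z)
          = ((-1 : K) ^ (i.val * j.val)) •
              (m (j + i) k (m j i (β y) (α x)) (β z)
                - m j (i + k) (α (β y)) (m i k (α x) z))) :=
  statement7_general K A 𝒜 hA μ α β hcomm hαe hβe hμe hαm hβm hass R hRe hRα hRβ hRB m hm
end

section
/- Let (A,·,α,β) be a BiHom-associative superalgebra with α,β bijective and let R be a Rota-Baxter operator of weight −1 on it. Define, for homogeneous x,y, the bracket [x,y] = R(x)·y − (−1)^{|x||y|}(α⁻¹β(y))·R(αβ⁻¹(x)) − x·y + x·R(y) − (−1)^{|x||y|}R(α⁻¹β(y))·(αβ⁻¹(x)) + (−1)^{|x||y|}(α⁻¹β(y))·(αβ⁻¹(x)). Then (A,[·,·],α,β) is a BiHom-Lie superalgebra and R is a Rota-Baxter operator of weight −1 on it, i.e. [R(x),R(y)] = R([R(x),y] + [x,R(y)] − [x,y]) for all homogeneous x,y. -/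
section Aux
variable {K : Type} [Field K] {A : Type} [AddCommGroup A] [Module K A]

/-- The derived product `x ∗ y = μ(Rx,y) + μ(x,Ry) − μ(x,y)`. -/
def Mop (μ : A →ₗ[K] A →ₗ[K] A) (R : A →ₗ[K] A) (x y : A) : A :=
  μ (R x) y + μ x (R y) - μ x y

variable (μ : A →ₗ[K] A →ₗ[K] A) (R : A →ₗ[K] A)

lemma Mop_sub_right (x y y' : A) :
    Mop μ R x (y - y') = Mop μ R x y - Mop μ R x y' := by
  simp only [Mop, map_sub, LinearMap.sub_apply]; abel

lemma Mop_smul_right (c : K) (x y : A) :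
    Mop μ R x (c • y) = c • Mop μ R x y := by
  simp only [Mop, map_smul, LinearMap.smul_apply, smul_add, smul_sub]

lemma Mop_sub_left (x x' y : A) :
    Mop μ R (x - x') y = Mop μ R x y - Mop μ R x' y := by
  simp only [Mop, map_sub, LinearMap.sub_apply]; abel

lemma Mop_smul_left (c : K) (x y : A) :
    Mop μ R (c • x) y = c • Mop μ R x y := by
  simp only [Mop, map_smul, LinearMap.smul_apply, smul_add, smul_sub]

/-- A grading-preserving linear automorphism has grading-preserving inverse. -/
lemma symm_pres (𝒜 : ZMod 2 → Submodule K A) (hA : DirectSum.IsInternal 𝒜)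
    (e : A ≃ₗ[K] A) (he : ∀ i : ZMod 2, ∀ a ∈ 𝒜 i, e a ∈ 𝒜 i) :
    ∀ i : ZMod 2, ∀ a ∈ 𝒜 i, e.symm a ∈ 𝒜 i := by
  have hsup : 𝒜 0 ⊔ 𝒜 1 = ⊤ := by
    rw [← hA.submodule_iSup_eq_top]
    refine le_antisymm (sup_le (le_iSup 𝒜 0) (le_iSup 𝒜 1)) (iSup_le fun i => ?_)
    rcases ((by decide : ∀ n : ZMod 2, n = 0 ∨ n = 1) i) with h | h <;> subst h
    · exact le_sup_left
    · exact le_sup_right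
  have hdisj : Disjoint (𝒜 0) (𝒜 1) :=
    hA.submodule_iSupIndep.pairwiseDisjoint (by decide : (0 : ZMod 2) ≠ 1)
  intro i a ha
  have hb : e.symm a ∈ 𝒜 0 ⊔ 𝒜 1 := by rw [hsup]; trivial
  rcases Submodule.mem_sup.mp hb with ⟨b0, hb0, b1, hb1, hbe⟩
  have hae : a = e b0 + e b1 := by
    rw [← map_add, hbe, e.apply_symm_apply]
  rcases ((by decide : ∀ n : ZMod 2, n = 0 ∨ n = 1) i) with h | h <;> subst h
  · have h1 : e b1 ∈ 𝒜 0 := by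
      have : e b1 = a - e b0 := by rw [hae]; abel
      rw [this]; exact sub_mem ha (he 0 b0 hb0)
    have : e b1 = 0 := Submodule.disjoint_def.mp hdisj _ h1 (he 1 b1 hb1)
    have hb1z : b1 = 0 := by apply e.injective; rw [this, map_zero]
    rw [← hbe, hb1z, add_zero]; exact hb0
  · have h0 : e b0 ∈ 𝒜 1 := by
      have : e b0 = a - e b1 := by rw [hae]; abel
      rw [this]; exact sub_mem ha (he 1 b1 hb1)
    have : e b0 = 0 := Submodule.disjoint_def.mp hdisj _ (he 0 b0 hb0) h0
    have hb0z : b0 = 0 := by apply e.injective; rw [this, map_zero]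
    rw [← hbe, hb0z, zero_add]; exact hb1

end Aux

/-!
STATEMENT 9: If `(A,·,α,β)` is a BiHom-associative superalgebra with `α, β` bijective and
`R` is a Rota-Baxter operator of weight `−1` on it, then the bracket
`[x,y] = R(x)·y − (−1)^{|x||y|}(α⁻¹β(y))·R(αβ⁻¹(x)) − x·y + x·R(y)
        − (−1)^{|x||y|}R(α⁻¹β(y))·(αβ⁻¹(x)) + (−1)^{|x||y|}(α⁻¹β(y))·(αβ⁻¹(x))`
makes `(A,[·,·],α,β)` a BiHom-Lie superalgebra and `R` is a Rota-Baxter operator of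
weight `−1` on it.
-/
theorem statement9
    (K : Type) [Field K] [CharZero K]
    (A : Type) [AddCommGroup A] [Module K A]
    (𝒜 : ZMod 2 → Submodule K A)
    (hA : DirectSum.IsInternal 𝒜)
    (μ : A →ₗ[K] A →ₗ[K] A)
    (α β : A ≃ₗ[K] A)
    (hcomm : ∀ a, α (β a) = β (α a))
    (hαe : ∀ i : ZMod 2, ∀ a ∈ 𝒜 i, α a ∈ 𝒜 i)
    (hβe : ∀ i : ZMod 2, ∀ a ∈ 𝒜 i, β a ∈ 𝒜 i)
    (hμe : ∀ i j : ZMod 2, ∀ a ∈ 𝒜 i, ∀ b ∈ 𝒜 j, μ a b ∈ 𝒜 (i + j))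
    (hαm : ∀ a b : A, α (μ a b) = μ (α a) (α b))
    (hβm : ∀ a b : A, β (μ a b) = μ (β a) (β b))
    (hass : ∀ a b c : A, μ (α a) (μ b c) = μ (μ a b) (β c))
    -- R is a Rota-Baxter operator of weight −1
    (R : A →ₗ[K] A)
    (hRe : ∀ i : ZMod 2, ∀ a ∈ 𝒜 i, R a ∈ 𝒜 i)
    (hRα : ∀ a, R (α a) = α (R a))
    (hRβ : ∀ a, R (β a) = β (R a))
    (hRB : ∀ i j : ZMod 2, ∀ x ∈ 𝒜 i, ∀ y ∈ 𝒜 j,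
      μ (R x) (R y) = R (μ (R x) y + μ x (R y) - μ x y))
    -- the bracket
    (br : ZMod 2 → ZMod 2 → A → A → A)
    (hbr : ∀ i j x y, br i j x y
      = μ (R x) y
        - ((-1 : K) ^ (i.val * j.val)) • μ (α.symm (β y)) (R (α (β.symm x)))
        - μ x y
        + μ x (R y)
        - ((-1 : K) ^ (i.val * j.val)) • μ (R (α.symm (β y))) (α (β.symm x))
        + ((-1 : K) ^ (i.val * j.val)) • μ (α.symm (β y)) (α (β.symm x))) :
    -- `(A,[·,·],α,β)` is a BiHom-Lie superalgebra:
    (∀ i j : ZMod 2, ∀ x ∈ 𝒜 i, ∀ y ∈ 𝒜 j, br i j x y ∈ 𝒜 (i + j))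
    ∧ (∀ i j : ZMod 2, ∀ x ∈ 𝒜 i, ∀ y ∈ 𝒜 j, α (br i j x y) = br i j (α x) (α y))
    ∧ (∀ i j : ZMod 2, ∀ x ∈ 𝒜 i, ∀ y ∈ 𝒜 j, β (br i j x y) = br i j (β x) (β y))
    ∧ (∀ i j : ZMod 2, ∀ x ∈ 𝒜 i, ∀ y ∈ 𝒜 j,
        br i j (β x) (α y) = -(((-1 : K) ^ (i.val * j.val)) • br j i (β y) (α x)))
    ∧ (∀ i j k : ZMod 2, ∀ x ∈ 𝒜 i, ∀ y ∈ 𝒜 j, ∀ z ∈ 𝒜 k,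
        ((-1 : K) ^ (i.val * k.val)) • br i (j + k) (β (β x)) (br j k (β y) (α z))
        + ((-1 : K) ^ (j.val * i.val)) • br j (k + i) (β (β y)) (br k i (β z) (α x))
        + ((-1 : K) ^ (k.val * j.val)) • br k (i + j) (β (β z)) (br i j (β x) (α y)) = 0)
    -- and R is a Rota-Baxter operator of weight −1 on it:
    ∧ (∀ i j : ZMod 2, ∀ x ∈ 𝒜 i, ∀ y ∈ 𝒜 j,
        br i j (R x) (R y)
          = R (br i j (R x) y + br i j x (R y) - br i j x y)) := by
  -- commutation helpers
  have hc1 : ∀ a, α.symm (β a) = β (α.symm a) := by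
    intro a; apply α.injective
    rw [α.apply_symm_apply, hcomm, α.apply_symm_apply]
  have hc2 : ∀ a, β.symm (α a) = α (β.symm a) := by
    intro a; apply β.injective
    rw [β.apply_symm_apply, ← hcomm, β.apply_symm_apply]
  have hRα' : ∀ a, R (α.symm a) = α.symm (R a) := by
    intro a; apply α.injective
    rw [← hRα, α.apply_symm_apply, α.apply_symm_apply]
  have hRβ' : ∀ a, R (β.symm a) = β.symm (R a) := by
    intro a; apply β.injective
    rw [← hRβ, β.apply_symm_apply, β.apply_symm_apply]
  have hs1 : ∀ a, α.symm (β (α a)) = β a := by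
    intro a; rw [← hcomm, α.symm_apply_apply]
  have hα'm : ∀ a b, α.symm (μ a b) = μ (α.symm a) (α.symm b) := by
    intro a b; apply α.injective
    rw [α.apply_symm_apply, hαm, α.apply_symm_apply, α.apply_symm_apply]
  have hβ'm : ∀ a b, β.symm (μ a b) = μ (β.symm a) (β.symm b) := by
    intro a b; apply β.injective
    rw [β.apply_symm_apply, hβm, β.apply_symm_apply, β.apply_symm_apply]
  -- grading preservation by inverses
  have hα'e : ∀ i : ZMod 2, ∀ a ∈ 𝒜 i, α.symm a ∈ 𝒜 i := symm_pres 𝒜 hA α hαe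
  have hβ'e : ∀ i : ZMod 2, ∀ a ∈ 𝒜 i, β.symm a ∈ 𝒜 i := symm_pres 𝒜 hA β hβe
  -- Mop facts
  have hMmem : ∀ i j : ZMod 2, ∀ a ∈ 𝒜 i, ∀ b ∈ 𝒜 j, Mop μ R a b ∈ 𝒜 (i + j) := by
    intro i j a ha b hb
    exact sub_mem (add_mem (hμe i j _ (hRe i a ha) _ hb) (hμe i j a ha _ (hRe j b hb)))
      (hμe i j a ha b hb)
  have hαM : ∀ a b, α (Mop μ R a b) = Mop μ R (α a) (α b) := by
    intro a b; simp only [Mop, map_add, map_sub, hαm, hRα]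
  have hβM : ∀ a b, β (Mop μ R a b) = Mop μ R (β a) (β b) := by
    intro a b; simp only [Mop, map_add, map_sub, hβm, hRβ]
  have hα'M : ∀ a b, α.symm (Mop μ R a b) = Mop μ R (α.symm a) (α.symm b) := by
    intro a b; simp only [Mop, map_add, map_sub, hα'm, hRα']
  have hβ'M : ∀ a b, β.symm (Mop μ R a b) = Mop μ R (β.symm a) (β.symm b) := by
    intro a b; simp only [Mop, map_add, map_sub, hβ'm, hRβ']
  -- the bracket in terms of Mop
  have hbr2 : ∀ (i j : ZMod 2) (x y : A), br i j x y
      = Mop μ R x y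
        - ((-1 : K) ^ (i.val * j.val)) • Mop μ R (α.symm (β y)) (α (β.symm x)) := by
    intro i j x y
    rw [hbr]; simp only [Mop, smul_add, smul_sub]; abel
  -- BiHom-associativity of Mop
  have hMassoc : ∀ (i j k : ZMod 2), ∀ a ∈ 𝒜 i, ∀ b ∈ 𝒜 j, ∀ c ∈ 𝒜 k,
      Mop μ R (α a) (Mop μ R b c) = Mop μ R (Mop μ R a b) (β c) := by
    intro i j k a ha b hb c hc
    simp only [Mop]
    rw [← hRB j k b hb c hc, ← hRB i j a ha b hb, hRα, hRβ]
    simp only [map_add, map_sub, LinearMap.add_apply, LinearMap.sub_apply]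
    simp only [hass]
    abel
  -- a Rota-Baxter style identity for Mop
  have hMRB : ∀ (i j : ZMod 2), ∀ a ∈ 𝒜 i, ∀ b ∈ 𝒜 j,
      Mop μ R (R a) (R b)
        = R (Mop μ R (R a) b + Mop μ R a (R b) - Mop μ R a b) := by
    intro i j a ha b hb
    have e1 := hRB i j (R a) (hRe i a ha) b hb
    have e2 := hRB i j a ha (R b) (hRe j b hb)
    have e3 := hRB i j a ha b hb
    simp only [Mop]
    rw [e1, e2, e3]
    simp only [map_add, map_sub]
  refine ⟨?_, ?_, ?_, ?_, ?_, ?_⟩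
  · -- membership
    intro i j x hx y hy
    rw [hbr2]
    refine sub_mem (hMmem i j x hx y hy) (Submodule.smul_mem _ _ ?_)
    have h := hMmem j i _ (hα'e j _ (hβe j y hy)) _ (hαe i _ (hβ'e i x hx))
    rwa [add_comm j i] at h
  · -- α-multiplicativity
    intro i j x hx y hy
    rw [hbr2, hbr2, map_sub, map_smul, hαM, hαM]
    simp only [α.apply_symm_apply, hs1, hc2]
  · -- β-multiplicativity
    intro i j x hx y hy
    rw [hbr2, hbr2, map_sub, map_smul, hβM, hβM, ← hc1, ← hcomm]
    simp only [β.apply_symm_apply, β.symm_apply_apply]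
  · -- skew-symmetry
    intro i j x hx y hy
    rw [hbr2, hbr2]
    simp only [hs1, β.symm_apply_apply]
    rcases ((by decide : ∀ n : ZMod 2, n = 0 ∨ n = 1) i) with hi | hi <;>
      rcases ((by decide : ∀ n : ZMod 2, n = 0 ∨ n = 1) j) with hj | hj <;>
        subst hi <;> subst hj <;>
          simp only [ZMod.val_zero, ZMod.val_one] <;> module
  · -- super Jacobi identity
    intro i j k x hx y hy z hz
    have key : ∀ (i j k : ZMod 2) (x y z : A), x ∈ 𝒜 i → y ∈ 𝒜 j → z ∈ 𝒜 k →
        br i (j + k) (β (β x)) (br j k (β y) (α z))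
        = Mop μ R (Mop μ R (α.symm (β (β x))) (β y)) (α (β z))
          - ((-1 : K) ^ (j.val * k.val)) •
              Mop μ R (Mop μ R (α.symm (β (β x))) (β z)) (α (β y))
          - ((-1 : K) ^ (i.val * ((j + k).val))) •
              (Mop μ R (Mop μ R (α.symm (β (β y))) (β z)) (α (β x))
               - ((-1 : K) ^ (j.val * k.val)) •
                  Mop μ R (Mop μ R (α.symm (β (β z))) (β y)) (α (β x))) := by
      clear hx hy hz
      intro i j k x y z hx hy hz
      have e1 : Mop μ R (β (β x)) (Mop μ R (β y) (α z))
          = Mop μ R (Mop μ R (α.symm (β (β x))) (β y)) (α (β z)) := by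
        have h := hMassoc i j k (α.symm (β (β x))) (hα'e i _ (hβe i _ (hβe i x hx)))
          (β y) (hβe j y hy) (α z) (hαe k z hz)
        rw [α.apply_symm_apply] at h
        rw [h, hcomm]
      have e2 : Mop μ R (β (β x)) (Mop μ R (β z) (α y))
          = Mop μ R (Mop μ R (α.symm (β (β x))) (β z)) (α (β y)) := by
        have h := hMassoc i k j (α.symm (β (β x))) (hα'e i _ (hβe i _ (hβe i x hx)))
          (β z) (hβe k z hz) (α y) (hαe j y hy)
        rw [α.apply_symm_apply] at h
        rw [h, hcomm]
      rw [hbr2 j k, hbr2 i (j + k)]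
      simp only [hs1, β.symm_apply_apply, Mop_sub_right, Mop_smul_right,
        map_sub, map_smul, hβM, hα'M, Mop_sub_left, Mop_smul_left]
      rw [e1, e2]
    rw [key i j k x y z hx hy hz, key j k i y z x hy hz hx, key k i j z x y hz hx hy]
    rcases ((by decide : ∀ n : ZMod 2, n = 0 ∨ n = 1) i) with hi | hi <;>
      rcases ((by decide : ∀ n : ZMod 2, n = 0 ∨ n = 1) j) with hj | hj <;>
        rcases ((by decide : ∀ n : ZMod 2, n = 0 ∨ n = 1) k) with hk | hk <;>
          subst hi <;> subst hj <;> subst hk <;>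
            simp only [show ((0 : ZMod 2) + 0) = 0 by decide,
              show ((0 : ZMod 2) + 1) = 1 by decide,
              show ((1 : ZMod 2) + 0) = 1 by decide,
              show ((1 : ZMod 2) + 1) = 0 by decide,
              ZMod.val_zero, ZMod.val_one] <;> module
  · -- Rota-Baxter of weight −1 on the bracket
    intro i j x hx y hy
    have hsy : α.symm (β y) ∈ 𝒜 j := hα'e j _ (hβe j y hy)
    have htx : α (β.symm x) ∈ 𝒜 i := hαe i _ (hβ'e i x hx)
    have hsR : ∀ a, α.symm (β (R a)) = R (α.symm (β a)) := by
      intro a; rw [← hRβ, hRα']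
    have htR : ∀ a, α (β.symm (R a)) = R (α (β.symm a)) := by
      intro a; rw [← hRβ', hRα]
    simp only [hbr2, hsR, htR]
    rw [hMRB i j x hx y hy, hMRB j i _ hsy _ htx]
    simp only [map_add, map_sub, map_smul]
    module
end

section
/- Let (A,μ,α,β) be a BiHom-associative superalgebra and let R be a Rota-Baxter operator of weight zero on it. Then the even products x▷y = μ(R(x),y) and x◁y = μ(x,R(y)) define a BiHom-L-dendriform superalgebra structure (A,▷,◁,α,β) on A. -/
/-!
STATEMENT 12: If `R` is a Rota-Baxter operator of weight zero on a BiHom-associative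
superalgebra `(A,μ,α,β)`, then `x▷y = μ(R(x),y)` and `x◁y = μ(x,R(y))` define a
BiHom-L-dendriform superalgebra structure `(A,▷,◁,α,β)` on `A`.
-/
theorem statement12
    (K : Type) [Field K] [CharZero K]
    (A : Type) [AddCommGroup A] [Module K A]
    (𝒜 : ZMod 2 → Submodule K A)
    (hA : DirectSum.IsInternal 𝒜)
    (μ : A →ₗ[K] A →ₗ[K] A)
    (α β : A →ₗ[K] A)
    (hcomm : ∀ a, α (β a) = β (α a))
    (hαe : ∀ i : ZMod 2, ∀ a ∈ 𝒜 i, α a ∈ 𝒜 i)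
    (hβe : ∀ i : ZMod 2, ∀ a ∈ 𝒜 i, β a ∈ 𝒜 i)
    (hμe : ∀ i j : ZMod 2, ∀ a ∈ 𝒜 i, ∀ b ∈ 𝒜 j, μ a b ∈ 𝒜 (i + j))
    (hαm : ∀ a b : A, α (μ a b) = μ (α a) (α b))
    (hβm : ∀ a b : A, β (μ a b) = μ (β a) (β b))
    (hass : ∀ a b c : A, μ (α a) (μ b c) = μ (μ a b) (β c))
    -- R is a Rota-Baxter operator of weight zero
    (R : A →ₗ[K] A)
    (hRe : ∀ i : ZMod 2, ∀ a ∈ 𝒜 i, R a ∈ 𝒜 i)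
    (hRα : ∀ a, R (α a) = α (R a))
    (hRβ : ∀ a, R (β a) = β (R a))
    (hRB : ∀ i j : ZMod 2, ∀ x ∈ 𝒜 i, ∀ y ∈ 𝒜 j,
      μ (R x) (R y) = R (μ (R x) y + μ x (R y)))
    -- the products ▷ and ◁
    (dr dl : A → A → A)
    (hdr : ∀ x y, dr x y = μ (R x) y)
    (hdl : ∀ x y, dl x y = μ x (R y)) :
    -- `(A,▷,◁,α,β)` is a BiHom-L-dendriform superalgebra:
    (∀ i j : ZMod 2, ∀ x ∈ 𝒜 i, ∀ y ∈ 𝒜 j, dr x y ∈ 𝒜 (i + j))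
    ∧ (∀ i j : ZMod 2, ∀ x ∈ 𝒜 i, ∀ y ∈ 𝒜 j, dl x y ∈ 𝒜 (i + j))
    ∧ (∀ x y : A, α (dr x y) = dr (α x) (α y))
    ∧ (∀ x y : A, α (dl x y) = dl (α x) (α y))
    ∧ (∀ x y : A, β (dr x y) = dr (β x) (β y))
    ∧ (∀ x y : A, β (dl x y) = dl (β x) (β y))
    ∧ (∀ i j k : ZMod 2, ∀ x ∈ 𝒜 i, ∀ y ∈ 𝒜 j, ∀ z ∈ 𝒜 k,
        dr (α (β x)) (dr (α y) z)
          = dr (dr (β x) (α y)) (β z) + dr (dl (β x) (α y)) (β z)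
            + ((-1 : K) ^ (i.val * j.val)) • dr (α (β y)) (dr (α x) z)
            - ((-1 : K) ^ (i.val * j.val)) • dr (dl (β y) (α x)) (β z)
            - ((-1 : K) ^ (i.val * j.val)) • dr (dr (β y) (α x)) (β z))
    ∧ (∀ i j k : ZMod 2, ∀ x ∈ 𝒜 i, ∀ y ∈ 𝒜 j, ∀ z ∈ 𝒜 k,
        dr (α (β x)) (dl (α y) z)
          = dl (dr (β x) (α y)) (β z)
            + ((-1 : K) ^ (i.val * j.val)) • dl (α (β y)) (dr (α x) z)
            + ((-1 : K) ^ (i.val * j.val)) • dl (α (β y)) (dl (α x) z)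
            - ((-1 : K) ^ (i.val * j.val)) • dl (dl (β y) (α x)) (β z)) := by
  -- key identity 1: for homogeneous a, b and any c,
  -- dr (αβ a) (dr (α b) c) = dr (dr (β a) (α b)) (β c) + dr (dl (β a) (α b)) (β c)
  have key1 : ∀ (p q : ZMod 2) (a : A), a ∈ 𝒜 p → ∀ b : A, b ∈ 𝒜 q → ∀ c : A,
      dr (α (β a)) (dr (α b) c)
        = dr (dr (β a) (α b)) (β c) + dr (dl (β a) (α b)) (β c) := by
    intro p q a ha b hb c
    simp only [hdr, hdl]
    rw [hRα, hass, hRB p q (β a) (hβe p a ha) (α b) (hαe q b hb),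
      map_add R, map_add μ, LinearMap.add_apply]
  -- key identity 2: for homogeneous a and any b, c,
  have key2 : ∀ (a b c : A),
      dr (α (β a)) (dl (α b) c) = dl (dr (β a) (α b)) (β c) := by
    intro a b c
    simp only [hdr, hdl]
    rw [hRα, hass, show β (R c) = R (β c) from (hRβ c).symm]
  -- key identity 3
  have key3 : ∀ (p k : ZMod 2) (a : A), a ∈ 𝒜 p → ∀ b : A, ∀ c : A, c ∈ 𝒜 k →
      dl (α (β b)) (dr (α a) c) + dl (α (β b)) (dl (α a) c)
        = dl (dl (β b) (α a)) (β c) := by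
    intro p k a ha b c hc
    simp only [hdr, hdl]
    rw [← map_add (μ (α (β b))), ← map_add R,
      ← hRB p k (α a) (hαe p a ha) c hc, hass,
      show β (R c) = R (β c) from (hRβ c).symm]
  refine ⟨?_, ?_, ?_, ?_, ?_, ?_, ?_, ?_⟩
  · intro i j x hx y hy; rw [hdr]; exact hμe i j _ (hRe i x hx) y hy
  · intro i j x hx y hy; rw [hdl]; exact hμe i j x hx _ (hRe j y hy)
  · intro x y; simp [hdr, hαm, hRα]
  · intro x y; simp [hdl, hαm, hRα]
  · intro x y; simp [hdr, hβm, hRβ]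
  · intro x y; simp [hdl, hβm, hRβ]
  · intro i j k x hx y hy z hz
    rw [key1 i j x hx y hy z, key1 j i y hy x hx z, smul_add]
    abel
  · intro i j k x hx y hy z hz
    rw [key2 x y z, ← key3 i k x hx y z hz, smul_add]
    abel
end

section
/- Let (A,μ,α,β) be a BiHom-associative superalgebra with α,β bijective, let R be a Rota-Baxter operator of weight zero on A, let (V,l,r,α_V,β_V) be an A-bimodule with α_V,β_V bijective, and let R_V: V → V be an even Rota-Baxter operator on V relative to R, i.e. α_V∘R_V = R_V∘α_V, β_V∘R_V = R_V∘β_V, l(R(x))R_V(v) = R_V(l(R(x))v + l(x)R_V(v)) and r(R(x))R_V(v) = R_V(r(x)R_V(v) + r(R(x))v) for all homogeneous x ∈ A, v ∈ V. Define l_▷(x)v = l(R(x))v, r_▷(x)v = r(x)(R_V(v)), l_◁(x)v = l(x)(R_V(v)), r_◁(x)v = r(R(x))v. Then (V, l_▷, r_▷, l_◁, r_◁, α_V, β_V) is an A-bimodule of the BiHom-L-dendriform superalgebra (A,▷,◁,α,β) given by x▷y = μ(R(x),y) and x◁y = μ(x,R(y)). -/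
/-!
Each identity follows by unfolding the four actions and applying one or two bimodule axioms
(at arguments of the form `R x`, `α x`, `β x`), together with the relative Rota–Baxter
identities of `R_V`; the terms carrying the sign `(-1)^{|x||y|}` cancel among themselves. In (a)
the Rota–Baxter identity of `R` turns `R [β x, α y]` into the supercommutator of `R (β x)` and
`R (α y)`, the two signs multiplying to `1`. The bimodule axioms are assumed for homogeneous
vectors only, but both sides are linear in the vector and the homogeneous components span `V`.
-/

open Set

theorem LinearMap.ext_of_iSup_eq_top {ι K V W : Type*} [Semiring K] [AddCommMonoid V]
    [Module K V] [AddCommMonoid W] [Module K W] {p : ι → Submodule K V} (hp : ⨆ i, p i = ⊤)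
    {f g : V →ₗ[K] W} (h : ∀ i, ∀ v ∈ p i, f v = g v) : f = g :=
  ext_on (s := ⋃ i, (p i : Set V)) (by rw [← Submodule.iSup_eq_span, hp])
    fun v hv ↦ by obtain ⟨i, hi⟩ := mem_iUnion.1 hv; exact h i v hi

section RotaBaxterBimodule

variable {K A V : Type*} [CommRing K] [AddCommGroup A] [Module K A] [AddCommGroup V]
  [Module K V] {μ : A →ₗ[K] A →ₗ[K] A} {R : A →ₗ[K] A} {l r : A →ₗ[K] V →ₗ[K] V}
  {RV : V →ₗ[K] V} {α β : A → A} {αV βV : V → V} {H : Set A}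

theorem l_rotaBaxter_bracket_apply
    (hRB : ∀ x ∈ H, ∀ y ∈ H, μ (R x) (R y) = R (μ (R x) y + μ x (R y)))
    (hll : ∀ x ∈ H, ∀ y ∈ H, ∀ v, l (α x) (l y v) = l (μ x y) (βV v))
    (hRα : ∀ x, R (α x) = α (R x)) (hα : MapsTo α H H) (hβ : MapsTo β H H)
    (hR : MapsTo R H H) {ε ε' : K} (hε : ε * ε' = 1) {x y : A} (hx : x ∈ H) (hy : y ∈ H)
    (v : V) :
    l (R (μ (R (β x)) (α y) - ε • μ (β y) (R (α x))
        - ε • (μ (R (β y)) (α x) - ε' • μ (β x) (R (α y))))) (βV v)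
      = l (R (α (β x))) (l (R (α y)) v) - ε • l (R (α (β y))) (l (R (α x)) v) := by
  have hsplit : μ (R (β x)) (α y) - ε • μ (β y) (R (α x))
        - ε • (μ (R (β y)) (α x) - ε' • μ (β x) (R (α y)))
      = (μ (R (β x)) (α y) + μ (β x) (R (α y)))
        - ε • (μ (R (β y)) (α x) + μ (β y) (R (α x))) := by
    rw [smul_sub, smul_smul, hε, one_smul, smul_add]; abel
  rw [hsplit, map_sub, map_smul, ← hRB _ (hβ hx) _ (hα hy), ← hRB _ (hβ hy) _ (hα hx),
    map_sub, map_smul, LinearMap.sub_apply, LinearMap.smul_apply, hRα (β x), hRα (β y),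
    hll _ (hR (hβ hx)) _ (hR (hα hy)), hll _ (hR (hβ hy)) _ (hR (hα hx))]

theorem l_circ_rotaBaxterV_apply
    (hll : ∀ x ∈ H, ∀ y ∈ H, ∀ v, l (α x) (l y v) = l (μ x y) (βV v))
    (hRVl : ∀ x ∈ H, ∀ v, l (R x) (RV v) = RV (l (R x) v + l x (RV v)))
    (hRα : ∀ x, R (α x) = α (R x)) (hRVβ : ∀ v, RV (βV v) = βV (RV v))
    (hα : MapsTo α H H) (hβ : MapsTo β H H) (hR : MapsTo R H H) (ε : K) {x y : A}
    (hx : x ∈ H) (hy : y ∈ H) (v : V) :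
    l (μ (R (β x)) (α y) - ε • μ (β y) (R (α x))) (RV (βV v))
      = l (R (α (β x))) (l (α y) (RV v)) - ε • l (α (β y)) (RV (l (α x) (RV v)))
        - ε • l (α (β y)) (RV (l (R (α x)) v)) := by
  rw [map_sub, map_smul, LinearMap.sub_apply, LinearMap.smul_apply, hRVβ, hRα (β x),
    ← hll _ (hR (hβ hx)) _ (hα hy), ← hll _ (hβ hy) _ (hR (hα hx)), hRVl _ (hα hx), map_add,
    map_add, smul_add]
  abel

theorem r_mul_rotaBaxter_left_apply
    (hrr : ∀ x ∈ H, ∀ y ∈ H, ∀ v, r (μ x y) (αV v) = r (β y) (r x v))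
    (hlr : ∀ x ∈ H, ∀ y ∈ H, ∀ v, l (α x) (r y v) = r (β y) (l x v))
    (hRVl : ∀ x ∈ H, ∀ v, l (R x) (RV v) = RV (l (R x) v + l x (RV v)))
    (hRVr : ∀ x ∈ H, ∀ v, r (R x) (RV v) = RV (r x (RV v) + r (R x) v))
    (hRα : ∀ x, R (α x) = α (R x)) (hRVα : ∀ v, RV (αV v) = αV (RV v))
    (hα : MapsTo α H H) (hβ : MapsTo β H H) (hR : MapsTo R H H) (ε : K) {x y : A}
    (hx : x ∈ H) (hy : y ∈ H) (v : V) :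
    r (μ (R (α x)) y) (RV (αV (βV v)))
      = r (β y) (RV (r (α x) (RV (βV v)))) + r (β y) (RV (r (R (α x)) (βV v)))
        + ε • l (R (α (β x))) (r y (RV (αV v)))
        - ε • r (β y) (RV (l (R (β x)) (αV v)))
        - ε • r (β y) (RV (l (β x) (RV (αV v)))) := by
  rw [hRVα, hrr _ (hR (hα hx)) _ hy, hRVr _ (hα hx), hRα (β x), hlr _ (hR (hβ hx)) _ hy,
    hRVl _ (hβ hx)]
  simp only [map_add, smul_add]
  abel

theorem r_mul_rotaBaxter_right_apply
    (hrr : ∀ x ∈ H, ∀ y ∈ H, ∀ v, r (μ x y) (αV v) = r (β y) (r x v))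
    (hlr : ∀ x ∈ H, ∀ y ∈ H, ∀ v, l (α x) (r y v) = r (β y) (l x v))
    (hRVr : ∀ x ∈ H, ∀ v, r (R x) (RV v) = RV (r x (RV v) + r (R x) v))
    (hRβ : ∀ x, R (β x) = β (R x)) (hRVα : ∀ v, RV (αV v) = αV (RV v))
    (hα : MapsTo α H H) (hβ : MapsTo β H H) (hR : MapsTo R H H) (ε : K) {x y : A}
    (hx : x ∈ H) (hy : y ∈ H) (v : V) :
    r (μ (α x) (R y)) (RV (αV (βV v)))
      = r (R (β y)) (r (α x) (RV (βV v)))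
        + ε • l (α (β x)) (RV (r y (RV (αV v))))
        + ε • l (α (β x)) (RV (r (R y) (αV v)))
        - ε • r (R (β y)) (l (β x) (RV (αV v))) := by
  rw [hRVα, hrr _ (hα hx) _ (hR hy), hRβ, ← hlr _ (hβ hx) _ (hR hy), hRVr _ hy, map_add,
    map_add, smul_add]
  abel

theorem r_rotaBaxter_bullet_apply
    (hRB : ∀ x ∈ H, ∀ y ∈ H, μ (R x) (R y) = R (μ (R x) y + μ x (R y)))
    (hrr : ∀ x ∈ H, ∀ y ∈ H, ∀ v, r (μ x y) (αV v) = r (β y) (r x v))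
    (hlr : ∀ x ∈ H, ∀ y ∈ H, ∀ v, l (α x) (r y v) = r (β y) (l x v))
    (hRα : ∀ x, R (α x) = α (R x)) (hRβ : ∀ x, R (β x) = β (R x))
    (hα : MapsTo α H H) (hβ : MapsTo β H H) (hR : MapsTo R H H) (ε : K) {x y : A}
    (hx : x ∈ H) (hy : y ∈ H) (v : V) :
    r (R (μ (R (α x)) y + μ (α x) (R y))) (αV (βV v))
      = r (R (β y)) (r (R (α x)) (βV v))
        - ε • r (R (β y)) (l (R (β x)) (αV v))
        + ε • l (R (α (β x))) (r (R y) (αV v)) := by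
  rw [← hRB _ (hα hx) _ hy, hrr _ (hR (hα hx)) _ (hR hy), hRα (β x),
    hlr _ (hR (hβ hx)) _ (hR hy), hRβ]
  abel

end RotaBaxterBimodule

theorem statement13_general
    (K : Type) [Field K]
    (A : Type) [AddCommGroup A] [Module K A]
    (𝒜 : ZMod 2 → Submodule K A)
    (μ : A →ₗ[K] A →ₗ[K] A)
    (α β : A ≃ₗ[K] A)
    (hcomm : ∀ a, α (β a) = β (α a))
    (hαe : ∀ i : ZMod 2, ∀ a ∈ 𝒜 i, α a ∈ 𝒜 i)
    (hβe : ∀ i : ZMod 2, ∀ a ∈ 𝒜 i, β a ∈ 𝒜 i)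
    -- R is a Rota-Baxter operator of weight zero on A
    (R : A →ₗ[K] A)
    (hRe : ∀ i : ZMod 2, ∀ a ∈ 𝒜 i, R a ∈ 𝒜 i)
    (hRα : ∀ a, R (α a) = α (R a))
    (hRβ : ∀ a, R (β a) = β (R a))
    (hRB : ∀ i j : ZMod 2, ∀ x ∈ 𝒜 i, ∀ y ∈ 𝒜 j,
      μ (R x) (R y) = R (μ (R x) y + μ x (R y)))
    -- the A-bimodule V
    (V : Type) [AddCommGroup V] [Module K V]
    (𝒱 : ZMod 2 → Submodule K V)
    (hV : DirectSum.IsInternal 𝒱)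
    (l r : A →ₗ[K] V →ₗ[K] V)
    (αV βV : V ≃ₗ[K] V)
    (hle : ∀ i k : ZMod 2, ∀ x ∈ 𝒜 i, ∀ v ∈ 𝒱 k, l x v ∈ 𝒱 (i + k))
    (hre : ∀ i k : ZMod 2, ∀ x ∈ 𝒜 i, ∀ v ∈ 𝒱 k, r x v ∈ 𝒱 (i + k))
    (hb1 : ∀ i j k : ZMod 2, ∀ x ∈ 𝒜 i, ∀ y ∈ 𝒜 j, ∀ v ∈ 𝒱 k,
      l (α x) (l y v) = l (μ x y) (βV v))
    (hb2 : ∀ i j k : ZMod 2, ∀ x ∈ 𝒜 i, ∀ y ∈ 𝒜 j, ∀ v ∈ 𝒱 k,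
      l (α x) (r y v) = r (β y) (l x v))
    (hb3 : ∀ i j k : ZMod 2, ∀ x ∈ 𝒜 i, ∀ y ∈ 𝒜 j, ∀ v ∈ 𝒱 k,
      r (μ x y) (αV v) = r (β y) (r x v))
    -- R_V is an even Rota-Baxter operator on V relative to R
    (RV : V →ₗ[K] V)
    (hRVe : ∀ k : ZMod 2, ∀ v ∈ 𝒱 k, RV v ∈ 𝒱 k)
    (hRVα : ∀ v, RV (αV v) = αV (RV v))
    (hRVβ : ∀ v, RV (βV v) = βV (RV v))
    (hRV1 : ∀ i k : ZMod 2, ∀ x ∈ 𝒜 i, ∀ v ∈ 𝒱 k,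
      l (R x) (RV v) = RV (l (R x) v + l x (RV v)))
    (hRV2 : ∀ i k : ZMod 2, ∀ x ∈ 𝒜 i, ∀ v ∈ 𝒱 k,
      r (R x) (RV v) = RV (r x (RV v) + r (R x) v))
    -- the BiHom-L-dendriform products on A and the derived products
    (tr tl bullet : A → A → A)
    (htr : ∀ a b, tr a b = μ (R a) b)
    (htl : ∀ a b, tl a b = μ a (R b))
    (hbul : ∀ a b, bullet a b = tr a b + tl a b)
    (circ brD : ZMod 2 → ZMod 2 → A → A → A)
    (hcirc : ∀ i j a b, circ i j a b
      = tr a b - ((-1 : K) ^ (i.val * j.val)) • tl (α.symm (β b)) (α (β.symm a)))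
    (hbrD : ∀ i j a b, brD i j a b
      = circ i j a b
        - ((-1 : K) ^ (i.val * j.val)) • circ j i (α.symm (β b)) (α (β.symm a)))
    -- the new actions on V
    (ldr rdr ldl rdl : A → V → V)
    (hldr : ∀ a v, ldr a v = l (R a) v)
    (hrdr : ∀ a v, rdr a v = r a (RV v))
    (hldl : ∀ a v, ldl a v = l a (RV v))
    (hrdl : ∀ a v, rdl a v = r (R a) v) :
    -- the new actions are even
    (∀ i k : ZMod 2, ∀ x ∈ 𝒜 i, ∀ v ∈ 𝒱 k, ldr x v ∈ 𝒱 (i + k))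
    ∧ (∀ i k : ZMod 2, ∀ x ∈ 𝒜 i, ∀ v ∈ 𝒱 k, rdr x v ∈ 𝒱 (i + k))
    ∧ (∀ i k : ZMod 2, ∀ x ∈ 𝒜 i, ∀ v ∈ 𝒱 k, ldl x v ∈ 𝒱 (i + k))
    ∧ (∀ i k : ZMod 2, ∀ x ∈ 𝒜 i, ∀ v ∈ 𝒱 k, rdl x v ∈ 𝒱 (i + k))
    -- (a)
    ∧ (∀ i j : ZMod 2, ∀ x ∈ 𝒜 i, ∀ y ∈ 𝒜 j, ∀ v : V,
        ldr (brD i j (β x) (α y)) (βV v)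
          = ldr (α (β x)) (ldr (α y) v)
            - ((-1 : K) ^ (i.val * j.val)) • ldr (α (β y)) (ldr (α x) v))
    -- (b)
    ∧ (∀ i j : ZMod 2, ∀ x ∈ 𝒜 i, ∀ y ∈ 𝒜 j, ∀ v : V,
        ldl (circ i j (β x) (α y)) (βV v)
          = ldr (α (β x)) (ldl (α y) v)
            - ((-1 : K) ^ (i.val * j.val)) • ldl (α (β y)) (ldl (α x) v)
            - ((-1 : K) ^ (i.val * j.val)) • ldl (α (β y)) (ldr (α x) v))
    -- (c)
    ∧ (∀ i j : ZMod 2, ∀ x ∈ 𝒜 i, ∀ y ∈ 𝒜 j, ∀ v : V,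
        rdr (tr (α x) y) (αV (βV v))
          = rdr (β y) (rdr (α x) (βV v)) + rdr (β y) (rdl (α x) (βV v))
            + ((-1 : K) ^ (i.val * j.val)) • ldr (α (β x)) (rdr y (αV v))
            - ((-1 : K) ^ (i.val * j.val)) • rdr (β y) (ldr (β x) (αV v))
            - ((-1 : K) ^ (i.val * j.val)) • rdr (β y) (ldl (β x) (αV v)))
    -- (d)
    ∧ (∀ i j : ZMod 2, ∀ x ∈ 𝒜 i, ∀ y ∈ 𝒜 j, ∀ v : V,
        rdr (tl (α x) y) (αV (βV v))
          = rdl (β y) (rdr (α x) (βV v))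
            + ((-1 : K) ^ (i.val * j.val)) • ldl (α (β x)) (rdr y (αV v))
            + ((-1 : K) ^ (i.val * j.val)) • ldl (α (β x)) (rdl y (αV v))
            - ((-1 : K) ^ (i.val * j.val)) • rdl (β y) (ldl (β x) (αV v)))
    -- (e)
    ∧ (∀ i j : ZMod 2, ∀ x ∈ 𝒜 i, ∀ y ∈ 𝒜 j, ∀ v : V,
        rdl (bullet (α x) y) (αV (βV v))
          = rdl (β y) (rdl (α x) (βV v))
            - ((-1 : K) ^ (i.val * j.val)) • rdl (β y) (ldr (β x) (αV v))
            + ((-1 : K) ^ (i.val * j.val)) • ldr (α (β x)) (rdl y (αV v))) := by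
  set H : Set A := {a | ∃ i, a ∈ 𝒜 i}
  have hα : MapsTo α H H := fun a ⟨i, ha⟩ ↦ ⟨i, hαe i a ha⟩
  have hβ : MapsTo β H H := fun a ⟨i, ha⟩ ↦ ⟨i, hβe i a ha⟩
  have hR : MapsTo R H H := fun a ⟨i, ha⟩ ↦ ⟨i, hRe i a ha⟩
  have hRB' : ∀ x ∈ H, ∀ y ∈ H, μ (R x) (R y) = R (μ (R x) y + μ x (R y)) :=
    fun x ⟨i, hx⟩ y ⟨j, hy⟩ ↦ hRB i j x hx y hy
  have ext {f g : V →ₗ[K] V} (h : ∀ k, ∀ v ∈ 𝒱 k, f v = g v) (v : V) : f v = g v :=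
    LinearMap.congr_fun (LinearMap.ext_of_iSup_eq_top hV.submodule_iSup_eq_top h) v
  have hll : ∀ x ∈ H, ∀ y ∈ H, ∀ v, l (α x) (l y v) = l (μ x y) (βV v) := fun x ⟨i, hx⟩ y ⟨j, hy⟩ ↦
    ext (f := l (α x) ∘ₗ l y) (g := l (μ x y) ∘ₗ βV.toLinearMap) (hb1 i j · x hx y hy)
  have hlr : ∀ x ∈ H, ∀ y ∈ H, ∀ v, l (α x) (r y v) = r (β y) (l x v) := fun x ⟨i, hx⟩ y ⟨j, hy⟩ ↦
    ext (f := l (α x) ∘ₗ r y) (g := r (β y) ∘ₗ l x) (hb2 i j · x hx y hy)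
  have hrr : ∀ x ∈ H, ∀ y ∈ H, ∀ v, r (μ x y) (αV v) = r (β y) (r x v) := fun x ⟨i, hx⟩ y ⟨j, hy⟩ ↦
    ext (f := r (μ x y) ∘ₗ αV.toLinearMap) (g := r (β y) ∘ₗ r x) (hb3 i j · x hx y hy)
  have hRVl : ∀ x ∈ H, ∀ v, l (R x) (RV v) = RV (l (R x) v + l x (RV v)) := fun x ⟨i, hx⟩ ↦
    ext (f := l (R x) ∘ₗ RV) (g := RV ∘ₗ (l (R x) + l x ∘ₗ RV)) (hRV1 i · x hx)
  have hRVr : ∀ x ∈ H, ∀ v, r (R x) (RV v) = RV (r x (RV v) + r (R x) v) := fun x ⟨i, hx⟩ ↦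
    ext (f := r (R x) ∘ₗ RV) (g := RV ∘ₗ (r x ∘ₗ RV + r (R x))) (hRV2 i · x hx)
  have hαβ (a : A) : α.symm (β (α a)) = β a := by rw [← hcomm, α.symm_apply_apply]
  simp only [hldr, hrdr, hldl, hrdl, hbrD, hcirc, hbul, htr, htl, hαβ, β.symm_apply_apply]
  refine ⟨fun i k x hx v hv ↦ hle i k _ (hRe i x hx) v hv,
    fun i k x hx v hv ↦ hre i k x hx _ (hRVe k v hv),
    fun i k x hx v hv ↦ hle i k x hx _ (hRVe k v hv),
    fun i k x hx v hv ↦ hre i k _ (hRe i x hx) v hv,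
    fun i j x hx y hy ↦ l_rotaBaxter_bracket_apply hRB' hll hRα hα hβ hR ?_ ⟨i, hx⟩ ⟨j, hy⟩,
    fun i j x hx y hy ↦ l_circ_rotaBaxterV_apply hll hRVl hRα hRVβ hα hβ hR _ ⟨i, hx⟩ ⟨j, hy⟩,
    fun i j x hx y hy ↦
      r_mul_rotaBaxter_left_apply hrr hlr hRVl hRVr hRα hRVα hα hβ hR _ ⟨i, hx⟩ ⟨j, hy⟩,
    fun i j x hx y hy ↦
      r_mul_rotaBaxter_right_apply hrr hlr hRVr hRβ hRVα hα hβ hR _ ⟨i, hx⟩ ⟨j, hy⟩,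
    fun i j x hx y hy ↦
      r_rotaBaxter_bullet_apply hRB' hrr hlr hRα hRβ hα hβ hR _ ⟨i, hx⟩ ⟨j, hy⟩⟩
  rw [Nat.mul_comm j.val, ← mul_pow]
  norm_num

theorem statement13
    (K : Type) [Field K] [CharZero K]
    (A : Type) [AddCommGroup A] [Module K A]
    (𝒜 : ZMod 2 → Submodule K A)
    (hA : DirectSum.IsInternal 𝒜)
    (μ : A →ₗ[K] A →ₗ[K] A)
    (α β : A ≃ₗ[K] A)
    (hcomm : ∀ a, α (β a) = β (α a))
    (hαe : ∀ i : ZMod 2, ∀ a ∈ 𝒜 i, α a ∈ 𝒜 i)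
    (hβe : ∀ i : ZMod 2, ∀ a ∈ 𝒜 i, β a ∈ 𝒜 i)
    (hμe : ∀ i j : ZMod 2, ∀ a ∈ 𝒜 i, ∀ b ∈ 𝒜 j, μ a b ∈ 𝒜 (i + j))
    (hαm : ∀ a b : A, α (μ a b) = μ (α a) (α b))
    (hβm : ∀ a b : A, β (μ a b) = μ (β a) (β b))
    (hass : ∀ a b c : A, μ (α a) (μ b c) = μ (μ a b) (β c))
    -- R is a Rota-Baxter operator of weight zero on A
    (R : A →ₗ[K] A)
    (hRe : ∀ i : ZMod 2, ∀ a ∈ 𝒜 i, R a ∈ 𝒜 i)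
    (hRα : ∀ a, R (α a) = α (R a))
    (hRβ : ∀ a, R (β a) = β (R a))
    (hRB : ∀ i j : ZMod 2, ∀ x ∈ 𝒜 i, ∀ y ∈ 𝒜 j,
      μ (R x) (R y) = R (μ (R x) y + μ x (R y)))
    -- the A-bimodule V
    (V : Type) [AddCommGroup V] [Module K V]
    (𝒱 : ZMod 2 → Submodule K V)
    (hV : DirectSum.IsInternal 𝒱)
    (l r : A →ₗ[K] V →ₗ[K] V)
    (αV βV : V ≃ₗ[K] V)
    (hαVe : ∀ k : ZMod 2, ∀ v ∈ 𝒱 k, αV v ∈ 𝒱 k)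
    (hβVe : ∀ k : ZMod 2, ∀ v ∈ 𝒱 k, βV v ∈ 𝒱 k)
    (hle : ∀ i k : ZMod 2, ∀ x ∈ 𝒜 i, ∀ v ∈ 𝒱 k, l x v ∈ 𝒱 (i + k))
    (hre : ∀ i k : ZMod 2, ∀ x ∈ 𝒜 i, ∀ v ∈ 𝒱 k, r x v ∈ 𝒱 (i + k))
    (hb1 : ∀ i j k : ZMod 2, ∀ x ∈ 𝒜 i, ∀ y ∈ 𝒜 j, ∀ v ∈ 𝒱 k,
      l (α x) (l y v) = l (μ x y) (βV v))
    (hb2 : ∀ i j k : ZMod 2, ∀ x ∈ 𝒜 i, ∀ y ∈ 𝒜 j, ∀ v ∈ 𝒱 k,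
      l (α x) (r y v) = r (β y) (l x v))
    (hb3 : ∀ i j k : ZMod 2, ∀ x ∈ 𝒜 i, ∀ y ∈ 𝒜 j, ∀ v ∈ 𝒱 k,
      r (μ x y) (αV v) = r (β y) (r x v))
    (hb4 : ∀ i k : ZMod 2, ∀ x ∈ 𝒜 i, ∀ v ∈ 𝒱 k, l (α x) (αV v) = αV (l x v))
    (hb5 : ∀ i k : ZMod 2, ∀ x ∈ 𝒜 i, ∀ v ∈ 𝒱 k, r (α x) (αV v) = αV (r x v))
    (hb6 : ∀ i k : ZMod 2, ∀ x ∈ 𝒜 i, ∀ v ∈ 𝒱 k, l (β x) (βV v) = βV (l x v))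
    (hb7 : ∀ i k : ZMod 2, ∀ x ∈ 𝒜 i, ∀ v ∈ 𝒱 k, r (β x) (βV v) = βV (r x v))
    -- R_V is an even Rota-Baxter operator on V relative to R
    (RV : V →ₗ[K] V)
    (hRVe : ∀ k : ZMod 2, ∀ v ∈ 𝒱 k, RV v ∈ 𝒱 k)
    (hRVα : ∀ v, RV (αV v) = αV (RV v))
    (hRVβ : ∀ v, RV (βV v) = βV (RV v))
    (hRV1 : ∀ i k : ZMod 2, ∀ x ∈ 𝒜 i, ∀ v ∈ 𝒱 k,
      l (R x) (RV v) = RV (l (R x) v + l x (RV v)))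
    (hRV2 : ∀ i k : ZMod 2, ∀ x ∈ 𝒜 i, ∀ v ∈ 𝒱 k,
      r (R x) (RV v) = RV (r x (RV v) + r (R x) v))
    -- the BiHom-L-dendriform products on A and the derived products
    (tr tl bullet : A → A → A)
    (htr : ∀ a b, tr a b = μ (R a) b)
    (htl : ∀ a b, tl a b = μ a (R b))
    (hbul : ∀ a b, bullet a b = tr a b + tl a b)
    (circ brD : ZMod 2 → ZMod 2 → A → A → A)
    (hcirc : ∀ i j a b, circ i j a b
      = tr a b - ((-1 : K) ^ (i.val * j.val)) • tl (α.symm (β b)) (α (β.symm a)))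
    (hbrD : ∀ i j a b, brD i j a b
      = circ i j a b
        - ((-1 : K) ^ (i.val * j.val)) • circ j i (α.symm (β b)) (α (β.symm a)))
    -- the new actions on V
    (ldr rdr ldl rdl : A → V → V)
    (hldr : ∀ a v, ldr a v = l (R a) v)
    (hrdr : ∀ a v, rdr a v = r a (RV v))
    (hldl : ∀ a v, ldl a v = l a (RV v))
    (hrdl : ∀ a v, rdl a v = r (R a) v) :
    -- the new actions are even
    (∀ i k : ZMod 2, ∀ x ∈ 𝒜 i, ∀ v ∈ 𝒱 k, ldr x v ∈ 𝒱 (i + k))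
    ∧ (∀ i k : ZMod 2, ∀ x ∈ 𝒜 i, ∀ v ∈ 𝒱 k, rdr x v ∈ 𝒱 (i + k))
    ∧ (∀ i k : ZMod 2, ∀ x ∈ 𝒜 i, ∀ v ∈ 𝒱 k, ldl x v ∈ 𝒱 (i + k))
    ∧ (∀ i k : ZMod 2, ∀ x ∈ 𝒜 i, ∀ v ∈ 𝒱 k, rdl x v ∈ 𝒱 (i + k))
    -- (a)
    ∧ (∀ i j : ZMod 2, ∀ x ∈ 𝒜 i, ∀ y ∈ 𝒜 j, ∀ v : V,
        ldr (brD i j (β x) (α y)) (βV v)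
          = ldr (α (β x)) (ldr (α y) v)
            - ((-1 : K) ^ (i.val * j.val)) • ldr (α (β y)) (ldr (α x) v))
    -- (b)
    ∧ (∀ i j : ZMod 2, ∀ x ∈ 𝒜 i, ∀ y ∈ 𝒜 j, ∀ v : V,
        ldl (circ i j (β x) (α y)) (βV v)
          = ldr (α (β x)) (ldl (α y) v)
            - ((-1 : K) ^ (i.val * j.val)) • ldl (α (β y)) (ldl (α x) v)
            - ((-1 : K) ^ (i.val * j.val)) • ldl (α (β y)) (ldr (α x) v))
    -- (c)
    ∧ (∀ i j : ZMod 2, ∀ x ∈ 𝒜 i, ∀ y ∈ 𝒜 j, ∀ v : V,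
        rdr (tr (α x) y) (αV (βV v))
          = rdr (β y) (rdr (α x) (βV v)) + rdr (β y) (rdl (α x) (βV v))
            + ((-1 : K) ^ (i.val * j.val)) • ldr (α (β x)) (rdr y (αV v))
            - ((-1 : K) ^ (i.val * j.val)) • rdr (β y) (ldr (β x) (αV v))
            - ((-1 : K) ^ (i.val * j.val)) • rdr (β y) (ldl (β x) (αV v)))
    -- (d)
    ∧ (∀ i j : ZMod 2, ∀ x ∈ 𝒜 i, ∀ y ∈ 𝒜 j, ∀ v : V,
        rdr (tl (α x) y) (αV (βV v))
          = rdl (β y) (rdr (α x) (βV v))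
            + ((-1 : K) ^ (i.val * j.val)) • ldl (α (β x)) (rdr y (αV v))
            + ((-1 : K) ^ (i.val * j.val)) • ldl (α (β x)) (rdl y (αV v))
            - ((-1 : K) ^ (i.val * j.val)) • rdl (β y) (ldl (β x) (αV v)))
    -- (e)
    ∧ (∀ i j : ZMod 2, ∀ x ∈ 𝒜 i, ∀ y ∈ 𝒜 j, ∀ v : V,
        rdl (bullet (α x) y) (αV (βV v))
          = rdl (β y) (rdl (α x) (βV v))
            - ((-1 : K) ^ (i.val * j.val)) • rdl (β y) (ldr (β x) (αV v))
            + ((-1 : K) ^ (i.val * j.val)) • ldr (α (β x)) (rdl y (αV v))) :=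
  statement13_general K A 𝒜 μ α β hcomm hαe hβe R hRe hRα hRβ hRB V 𝒱 hV l r αV βV hle hre hb1 hb2
    hb3 RV hRVe hRVα hRVβ hRV1 hRV2 tr tl bullet htr htl hbul circ brD hcirc hbrD ldr rdr ldl rdl
    hldr hrdr hldl hrdl
end
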